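/- arXiv:2506.03908 — 5 statements merged into one kernel-verified Lean document; each statement's English description precedes it below -/
import Mathlib

section
/- Let r ∈ ℕ, let 0 = s₀ ≤ s₁ ≤ … ≤ s_{r+1} = S be real numbers, and let Ā, A₁, …, A_{r+1} be n×n real matrices with ‖Ā‖ ≤ M, ‖Aₙ‖ ≤ M and ‖Ā − Aₙ‖ ≤ ε for all n = 1,…,r+1. Then ‖∏_{n=1}^{r+1} exp(Ā·(sₙ−sₙ₋₁)) − ∏_{n=1}^{r+1} exp(Aₙ·(sₙ−sₙ₋₁))‖ ≤ ε · S · exp((M+ε)·S). -/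
open NormedSpace Nat

section aux

set_option linter.unusedSectionVars false

variable {𝔸 : Type*} [NormedRing 𝔸] [NormedAlgebra ℝ 𝔸] [CompleteSpace 𝔸]

lemma my_norm_pow_le (h1 : ‖(1 : 𝔸)‖ ≤ 1) (x : 𝔸) (n : ℕ) : ‖x ^ n‖ ≤ ‖x‖ ^ n := by
  cases n with
  | zero => simpa using h1
  | succ n => exact norm_pow_le' x n.succ_pos

lemma my_norm_exp_le (h1 : ‖(1 : 𝔸)‖ ≤ 1) (x : 𝔸) : ‖exp x‖ ≤ Real.exp ‖x‖ := by
  rw [exp_eq_tsum ℝ]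
  have hexp : Real.exp ‖x‖ = ∑' n : ℕ, ‖x‖ ^ n / n ! := by
    rw [Real.exp_eq_exp_ℝ, NormedSpace.exp_eq_tsum_div]
  rw [hexp]
  refine tsum_of_norm_bounded (Real.summable_pow_div_factorial ‖x‖).hasSum fun n => ?_
  rw [norm_smul, Real.norm_eq_abs, abs_inv, Nat.abs_cast, div_eq_inv_mul]
  exact mul_le_mul_of_nonneg_left (my_norm_pow_le h1 x n) (by positivity)

lemma my_pow_sub_pow (h1 : ‖(1 : 𝔸)‖ ≤ 1) {x y : 𝔸} {c : ℝ} (hx : ‖x‖ ≤ c) (hy : ‖y‖ ≤ c)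
    (n : ℕ) : ‖x ^ n - y ^ n‖ ≤ n * c ^ (n - 1) * ‖x - y‖ := by
  have hc : 0 ≤ c := le_trans (norm_nonneg x) hx
  induction n with
  | zero => simp
  | succ n ih =>
    have hdecomp : x ^ (n + 1) - y ^ (n + 1) = x * (x ^ n - y ^ n) + (x - y) * y ^ n := by
      rw [_root_.pow_succ', _root_.pow_succ']
      noncomm_ring
    rw [hdecomp]
    have t1 : ‖x‖ * ‖x ^ n - y ^ n‖ ≤ c * ((n : ℝ) * c ^ (n - 1) * ‖x - y‖) :=
      mul_le_mul hx ih (norm_nonneg _) hc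
    have t2 : ‖x - y‖ * ‖y ^ n‖ ≤ ‖x - y‖ * c ^ n :=
      mul_le_mul_of_nonneg_left
        (le_trans (my_norm_pow_le h1 y n) (pow_le_pow_left₀ (norm_nonneg _) hy n))
        (norm_nonneg _)
    have t3 : c * ((n : ℝ) * c ^ (n - 1) * ‖x - y‖) + ‖x - y‖ * c ^ n
        ≤ (↑(n + 1) : ℝ) * c ^ (n + 1 - 1) * ‖x - y‖ := by
      rcases Nat.eq_zero_or_pos n with h | h
      · subst h; simp
      · have hcc : c * c ^ (n - 1) = c ^ n := by
          rw [← _root_.pow_succ']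
          congr 1
          omega
        simp only [Nat.add_sub_cancel]
        push_cast
        have hr : c * ((n : ℝ) * c ^ (n - 1) * ‖x - y‖) = (n : ℝ) * c ^ n * ‖x - y‖ := by
          rw [← hcc]; ring
        rw [hr]
        nlinarith [norm_nonneg (x - y), pow_nonneg hc n]
    calc ‖x * (x ^ n - y ^ n) + (x - y) * y ^ n‖
        ≤ ‖x * (x ^ n - y ^ n)‖ + ‖(x - y) * y ^ n‖ := norm_add_le _ _
      _ ≤ ‖x‖ * ‖x ^ n - y ^ n‖ + ‖x - y‖ * ‖y ^ n‖ :=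
          add_le_add (norm_mul_le _ _) (norm_mul_le _ _)
      _ ≤ _ := le_trans (add_le_add t1 t2) t3

lemma my_exp_sub_exp (h1 : ‖(1 : 𝔸)‖ ≤ 1) {x y : 𝔸} {c : ℝ} (hx : ‖x‖ ≤ c) (hy : ‖y‖ ≤ c) :
    ‖exp x - exp y‖ ≤ ‖x - y‖ * Real.exp c := by
  have hc : 0 ≤ c := le_trans (norm_nonneg x) hx
  simp only [exp_eq_tsum ℝ]
  rw [← Summable.tsum_sub (NormedSpace.expSeries_summable' (𝕂 := ℝ) x)
      (NormedSpace.expSeries_summable' (𝕂 := ℝ) y)]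
  set f : ℕ → ℝ := fun n => ‖x - y‖ * ((n : ℝ) * c ^ (n - 1) / n !) with hf
  have hfs : HasSum f (‖x - y‖ * Real.exp c) := by
    have h2 : HasSum (fun n : ℕ => (n : ℝ) * c ^ (n - 1) / n !) (Real.exp c) := by
      rw [← hasSum_nat_add_iff' 1]
      have heq : (fun n : ℕ => ((n + 1 : ℕ) : ℝ) * c ^ (n + 1 - 1) / ↑(n + 1)!)
          = fun n : ℕ => c ^ n / n ! := by
        funext n
        rw [Nat.factorial_succ, Nat.add_sub_cancel]
        push_cast
        have h0 : ((n !:ℝ)) ≠ 0 := by positivity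
        field_simp
      simp only [Finset.range_one, Finset.sum_singleton, Nat.cast_zero, zero_mul, zero_div,
        sub_zero, heq]
      have := (Real.summable_pow_div_factorial c).hasSum
      rwa [show (∑' n : ℕ, c ^ n / n !) = Real.exp c by
        rw [Real.exp_eq_exp_ℝ, NormedSpace.exp_eq_tsum_div]] at this
    exact h2.mul_left _
  refine tsum_of_norm_bounded hfs fun n => ?_
  rw [← smul_sub, norm_smul, Real.norm_eq_abs, abs_inv, Nat.abs_cast, hf]
  have hb := my_pow_sub_pow h1 hx hy n
  have hn : (0:ℝ) < n ! := by positivity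
  calc ((n !: ℝ))⁻¹ * ‖x ^ n - y ^ n‖ ≤ ((n !: ℝ))⁻¹ * ((n : ℝ) * c ^ (n - 1) * ‖x - y‖) := by
        gcongr
    _ = ‖x - y‖ * ((n : ℝ) * c ^ (n - 1) / n !) := by field_simp

end aux

/-- Descending product `∏_{j=a}^{b} C j := C b * C (b-1) * ⋯ * C a`
(the identity if `b < a`). -/
noncomputable def dprod {α : Type*} [Monoid α] (C : ℕ → α) (a b : ℕ) : α :=
  ((List.range' a (b + 1 - a)).reverse.map C).prod

lemma dprod_one_zero {α : Type*} [Monoid α] (C : ℕ → α) : dprod C 1 0 = 1 := by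
  simp [dprod]

lemma dprod_one_succ {α : Type*} [Monoid α] (C : ℕ → α) (m : ℕ) :
    dprod C 1 (m + 1) = C (m + 1) * dprod C 1 m := by
  unfold dprod
  have h1 : m + 1 + 1 - 1 = m + 1 := by omega
  have h2 : m + 1 - 1 = m := by omega
  rw [h1, h2, List.range'_concat, List.reverse_append]
  simp [Nat.add_comm]

set_option maxHeartbeats 1000000 in
/-- Let `r ∈ ℕ`, `0 = s₀ ≤ s₁ ≤ … ≤ s_{r+1} = S`, and let
`Ā, A₁, …, A_{r+1}` be `n × n` real matrices (viewed as operators on Euclidean space with the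
L2 operator norm) with `‖Ā‖ ≤ M`, `‖Aₙ‖ ≤ M` and `‖Ā − Aₙ‖ ≤ ε` for `n = 1,…,r+1`.  Then
`‖∏_{n=1}^{r+1} exp(Ā(sₙ−sₙ₋₁)) − ∏_{n=1}^{r+1} exp(Aₙ(sₙ−sₙ₋₁))‖ ≤ ε·S·exp((M+ε)·S)`,
products taken in descending index order. -/
theorem stmt2 (q r : ℕ) (S M ε : ℝ) (s : ℕ → ℝ)
    (Abar : EuclideanSpace ℝ (Fin q) →L[ℝ] EuclideanSpace ℝ (Fin q))
    (A : ℕ → (EuclideanSpace ℝ (Fin q) →L[ℝ] EuclideanSpace ℝ (Fin q)))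
    (hs0 : s 0 = 0) (hmono : ∀ k, k ≤ r → s k ≤ s (k + 1)) (hsS : s (r + 1) = S)
    (hAbar : ‖Abar‖ ≤ M)
    (hA : ∀ m, 1 ≤ m → m ≤ r + 1 → ‖A m‖ ≤ M)
    (hdiff : ∀ m, 1 ≤ m → m ≤ r + 1 → ‖Abar - A m‖ ≤ ε) :
    ‖dprod (fun m => NormedSpace.exp ((s m - s (m - 1)) • Abar)) 1 (r + 1) -
        dprod (fun m => NormedSpace.exp ((s m - s (m - 1)) • A m)) 1 (r + 1)‖ ≤
      ε * S * Real.exp ((M + ε) * S) := by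
  have hM : 0 ≤ M := le_trans (norm_nonneg _) hAbar
  have hε : 0 ≤ ε := le_trans (norm_nonneg _) (hdiff 1 le_rfl (by omega))
  have h1 : ‖(1 : EuclideanSpace ℝ (Fin q) →L[ℝ] EuclideanSpace ℝ (Fin q))‖ ≤ 1 := by
    rw [ContinuousLinearMap.one_def]
    exact ContinuousLinearMap.norm_id_le
  set B : ℕ → (EuclideanSpace ℝ (Fin q) →L[ℝ] EuclideanSpace ℝ (Fin q)) :=
    fun m => NormedSpace.exp ((s m - s (m - 1)) • Abar) with hB
  set C : ℕ → (EuclideanSpace ℝ (Fin q) →L[ℝ] EuclideanSpace ℝ (Fin q)) :=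
    fun m => NormedSpace.exp ((s m - s (m - 1)) • A m) with hC
  have hns : ∀ (c : ℝ) (T : EuclideanSpace ℝ (Fin q) →L[ℝ] EuclideanSpace ℝ (Fin q)),
      ‖c • T‖ = |c| * ‖T‖ := fun c T => by
    rw [show |c| = ‖c‖ from rfl]; exact norm_smul c T
  have hsnn : ∀ m, m ≤ r + 1 → 0 ≤ s m := by
    intro m
    induction m with
    | zero => intro _; rw [hs0]
    | succ k ih => intro hk; exact le_trans (ih (by omega)) (hmono k (by omega))
  have hΔ : ∀ m, m ≤ r → 0 ≤ s (m + 1) - s m := by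
    intro m hm
    have := hmono m hm
    linarith
  have hBn : ∀ m, m ≤ r → ‖B (m + 1)‖ ≤ Real.exp (M * (s (m + 1) - s m)) := by
    intro m hm
    refine le_trans (my_norm_exp_le h1 _) (Real.exp_le_exp.2 ?_)
    rw [hns]
    simp only [Nat.add_sub_cancel]
    rw [abs_of_nonneg (hΔ m hm)]
    calc (s (m + 1) - s m) * ‖Abar‖ ≤ (s (m + 1) - s m) * M :=
          mul_le_mul_of_nonneg_left hAbar (hΔ m hm)
      _ = M * (s (m + 1) - s m) := by ring
  have hCn : ∀ m, m ≤ r → ‖C (m + 1)‖ ≤ Real.exp (M * (s (m + 1) - s m)) := by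
    intro m hm
    refine le_trans (my_norm_exp_le h1 _) (Real.exp_le_exp.2 ?_)
    rw [hns]
    simp only [Nat.add_sub_cancel]
    rw [abs_of_nonneg (hΔ m hm)]
    calc (s (m + 1) - s m) * ‖A (m + 1)‖ ≤ (s (m + 1) - s m) * M :=
          mul_le_mul_of_nonneg_left (hA (m + 1) (by omega) (by omega)) (hΔ m hm)
      _ = M * (s (m + 1) - s m) := by ring
  have hBC : ∀ m, m ≤ r → ‖B (m + 1) - C (m + 1)‖ ≤
      ε * (s (m + 1) - s m) * Real.exp (M * (s (m + 1) - s m)) := by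
    intro m hm
    have hx : ‖(s (m + 1) - s ((m + 1) - 1)) • Abar‖ ≤ M * (s (m + 1) - s m) := by
      rw [hns]
      simp only [Nat.add_sub_cancel]
      rw [abs_of_nonneg (hΔ m hm)]
      calc (s (m + 1) - s m) * ‖Abar‖ ≤ (s (m + 1) - s m) * M :=
            mul_le_mul_of_nonneg_left hAbar (hΔ m hm)
        _ = M * (s (m + 1) - s m) := by ring
    have hy : ‖(s (m + 1) - s ((m + 1) - 1)) • A (m + 1)‖ ≤ M * (s (m + 1) - s m) := by
      rw [hns]
      simp only [Nat.add_sub_cancel]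
      rw [abs_of_nonneg (hΔ m hm)]
      calc (s (m + 1) - s m) * ‖A (m + 1)‖ ≤ (s (m + 1) - s m) * M :=
            mul_le_mul_of_nonneg_left (hA (m + 1) (by omega) (by omega)) (hΔ m hm)
        _ = M * (s (m + 1) - s m) := by ring
    refine le_trans (my_exp_sub_exp h1 hx hy) ?_
    have e2 : (s (m + 1) - s ((m + 1) - 1)) • Abar - (s (m + 1) - s ((m + 1) - 1)) • A (m + 1)
        = (s (m + 1) - s ((m + 1) - 1)) • (Abar - A (m + 1)) := (smul_sub _ _ _).symm
    rw [e2, hns]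
    simp only [Nat.add_sub_cancel]
    rw [abs_of_nonneg (hΔ m hm)]
    have : (s (m + 1) - s m) * ‖Abar - A (m + 1)‖ ≤ (s (m + 1) - s m) * ε :=
      mul_le_mul_of_nonneg_left (hdiff (m + 1) (by omega) (by omega)) (hΔ m hm)
    calc (s (m + 1) - s m) * ‖Abar - A (m + 1)‖ * Real.exp (M * (s (m + 1) - s m))
        ≤ (s (m + 1) - s m) * ε * Real.exp (M * (s (m + 1) - s m)) :=
          mul_le_mul_of_nonneg_right this (Real.exp_nonneg _)
      _ = ε * (s (m + 1) - s m) * Real.exp (M * (s (m + 1) - s m)) := by ring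
  have key : ∀ m, m ≤ r + 1 → ‖dprod B 1 m‖ ≤ Real.exp (M * s m) ∧
      ‖dprod B 1 m - dprod C 1 m‖ ≤ ε * s m * Real.exp (M * s m) := by
    intro m
    induction m with
    | zero =>
      intro _
      rw [dprod_one_zero, dprod_one_zero, hs0, mul_zero, Real.exp_zero, sub_self, norm_zero]
      exact ⟨h1, by simp⟩
    | succ k ih =>
      intro hk
      obtain ⟨ihP, ihD⟩ := ih (by omega)
      have hkr : k ≤ r := by omega
      have hab : Real.exp (M * (s (k + 1) - s k)) * Real.exp (M * s k)
          = Real.exp (M * s (k + 1)) := by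
        rw [← Real.exp_add]; congr 1; ring
      rw [dprod_one_succ, dprod_one_succ]
      constructor
      · calc ‖B (k + 1) * dprod B 1 k‖ ≤ ‖B (k + 1)‖ * ‖dprod B 1 k‖ := norm_mul_le _ _
          _ ≤ Real.exp (M * (s (k + 1) - s k)) * Real.exp (M * s k) :=
              mul_le_mul (hBn k hkr) ihP (norm_nonneg _) (Real.exp_nonneg _)
          _ = Real.exp (M * s (k + 1)) := hab
      · have hdecomp : B (k + 1) * dprod B 1 k - C (k + 1) * dprod C 1 k
            = (B (k + 1) - C (k + 1)) * dprod B 1 k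
              + C (k + 1) * (dprod B 1 k - dprod C 1 k) := by
          rw [sub_mul, mul_sub]; abel
        rw [hdecomp]
        calc ‖(B (k + 1) - C (k + 1)) * dprod B 1 k
              + C (k + 1) * (dprod B 1 k - dprod C 1 k)‖
            ≤ ‖(B (k + 1) - C (k + 1)) * dprod B 1 k‖
              + ‖C (k + 1) * (dprod B 1 k - dprod C 1 k)‖ := norm_add_le _ _
          _ ≤ ‖B (k + 1) - C (k + 1)‖ * ‖dprod B 1 k‖
              + ‖C (k + 1)‖ * ‖dprod B 1 k - dprod C 1 k‖ :=
              add_le_add (norm_mul_le _ _) (norm_mul_le _ _)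
          _ ≤ (ε * (s (k + 1) - s k) * Real.exp (M * (s (k + 1) - s k))) * Real.exp (M * s k)
              + Real.exp (M * (s (k + 1) - s k)) * (ε * s k * Real.exp (M * s k)) :=
              add_le_add
                (mul_le_mul (hBC k hkr) ihP (norm_nonneg _)
                  (mul_nonneg (mul_nonneg hε (hΔ k hkr)) (Real.exp_nonneg _)))
                (mul_le_mul (hCn k hkr) ihD (norm_nonneg _) (Real.exp_nonneg _))
          _ = ε * s (k + 1) * Real.exp (M * s (k + 1)) := by
              rw [← hab]; ring
  obtain ⟨-, hfin⟩ := key (r + 1) le_rfl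
  have hS : 0 ≤ S := hsS ▸ hsnn (r + 1) le_rfl
  rw [hsS] at hfin
  refine le_trans hfin ?_
  have : Real.exp (M * S) ≤ Real.exp ((M + ε) * S) := Real.exp_le_exp.2 (by nlinarith)
  exact mul_le_mul_of_nonneg_left this (mul_nonneg hε hS)
end

section
/- (Exact predictor construction.) Let D > 0, t ∈ ℝ, r ∈ ℕ, and 0 = s₀ ≤ s₁ ≤ … ≤ s_{r+1} = D. For n = 1,…,r+1 let Aₙ be q×q real matrices and Bₙ ∈ ℝ^q. Let U : ℝ → ℝ be continuous on [t−D, t], and let X : [t, t+D] → ℝ^q be continuous and, on each open interval (t+sₙ₋₁, t+sₙ), differentiable with X′(u) = Aₙ X(u) + U(u−D) Bₙ. Then X(t+D) = (∏_{n=1}^{r+1} exp(Aₙ(sₙ−sₙ₋₁))) X(t) + ∑_{n=1}^{r+1} (∏_{j=n}^{r} exp(A_{j+1}(s_{j+1}−s_j))) ∫_{t−D+sₙ₋₁}^{t−D+sₙ} exp(Aₙ(t−D+sₙ−θ)) U(θ) Bₙ dθ. -/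
open MeasureTheory

lemma dprod_of_lt {α : Type*} [Monoid α] (C : ℕ → α) {a b : ℕ} (h : b < a) : dprod C a b = 1 := by
  unfold dprod
  have : b + 1 - a = 0 := by omega
  simp [this]

lemma dprod_succ_top {α : Type*} [Monoid α] (C : ℕ → α) {a b : ℕ} (h : a ≤ b + 1) :
    dprod C a (b + 1) = C (b + 1) * dprod C a b := by
  unfold dprod
  have h1 : b + 1 + 1 - a = (b + 1 - a) + 1 := by omega
  have h2 : a + (b + 1 - a) = b + 1 := by omega
  rw [h1, List.range'_1_concat, h2]
  simp

lemma eq_of_hasDerivAt_zero {E : Type*} [NormedAddCommGroup E] [NormedSpace ℝ E]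
    {h : ℝ → E} {a b : ℝ} (hab : a ≤ b) (hcont : ContinuousOn h (Set.Icc a b))
    (hderiv : ∀ u ∈ Set.Ioo a b, HasDerivAt h 0 u) : h b = h a := by
  rcases eq_or_lt_of_le hab with rfl | hlt
  · rfl
  have key : ∀ u ∈ Set.Ioc a b, h b = h u := by
    intro u hu
    have := constant_of_has_deriv_right_zero (f := h) (a := u) (b := b)
      (hcont.mono (Set.Icc_subset_Icc hu.1.le le_rfl)) (fun y hy =>
        (hderiv y ⟨lt_of_lt_of_le hu.1 hy.1, hy.2⟩).hasDerivWithinAt)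
    exact this b ⟨hu.2, le_rfl⟩
  have hne : (nhdsWithin a (Set.Ioc a b)).NeBot := left_nhdsWithin_Ioc_neBot hlt
  have t1 : Filter.Tendsto h (nhdsWithin a (Set.Ioc a b)) (nhds (h a)) :=
    (hcont a ⟨le_rfl, hab⟩).mono Set.Ioc_subset_Icc_self
  have t2 : Filter.Tendsto h (nhdsWithin a (Set.Ioc a b)) (nhds (h b)) := by
    apply Filter.Tendsto.congr' _ tendsto_const_nhds
    filter_upwards [self_mem_nhdsWithin] with u hu
    exact key u hu
  exact tendsto_nhds_unique t2 t1

/-- Variation of constants on one interval. -/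
lemma voc {E : Type*} [NormedAddCommGroup E] [NormedSpace ℝ E] [CompleteSpace E]
    (A : E →L[ℝ] E) (f X : ℝ → E) {a b : ℝ} (hab : a ≤ b)
    (hf : ContinuousOn f (Set.Icc a b)) (hX : ContinuousOn X (Set.Icc a b))
    (hode : ∀ u ∈ Set.Ioo a b, HasDerivAt X (A (X u) + f u) u) :
    X b = NormedSpace.exp ((b - a) • A) (X a) +
      ∫ θ in a..b, NormedSpace.exp ((b - θ) • A) (f θ) := by
  set M : ℝ → (E →L[ℝ] E) := fun u => NormedSpace.exp ((b - u) • A) with hM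
  set g : ℝ → E := fun θ => M θ (f θ) with hg
  have hMcont : Continuous M := by
    exact (continuous_iff_continuousAt.2 fun c => (hasDerivAt_exp_smul_const A c).continuousAt).comp (by fun_prop)
  have hgcont : ContinuousOn g (Set.Icc a b) := hMcont.continuousOn.clm_apply hf
  have hgIntOn : IntegrableOn g (Set.uIcc a b) volume := by
    rw [Set.uIcc_of_le hab]; exact hgcont.integrableOn_Icc
  set F : ℝ → E := fun u => ∫ θ in u..b, g θ with hF
  set h : ℝ → E := fun u => M u (X u) + F u with hh
  have hhb : h b = X b := by
    simp [hh, hF, hM, sub_self, zero_smul, NormedSpace.exp_zero]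
  have hhcont : ContinuousOn h (Set.Icc a b) := by
    apply ContinuousOn.add
    · exact hMcont.continuousOn.clm_apply hX
    · have := intervalIntegral.continuousOn_primitive_interval_left
        (f := g) (μ := volume) (a := a) (b := b) hgIntOn
      rwa [Set.uIcc_of_le hab] at this
  have hderiv : ∀ u ∈ Set.Ioo a b, HasDerivAt h 0 u := by
    intro u hu
    have hMd : HasDerivAt M (-(M u * A)) u := by
      have h1 : HasDerivAt (fun c : ℝ => NormedSpace.exp (c • A))
          (NormedSpace.exp ((b - u) • A) * A) (b - u) := hasDerivAt_exp_smul_const A (b - u)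
      have h2 : HasDerivAt (fun x : ℝ => b - x) (-1) u := by
        simpa using (hasDerivAt_id u).const_sub b
      have := h1.scomp u h2
      simp only [neg_smul, one_smul] at this
      exact this
    have d1 := hMd.clm_apply (hode u hu)
    have hgu : ContinuousAt g u := hgcont.continuousAt (Icc_mem_nhds hu.1 hu.2)
    have hgint' : IntervalIntegrable g volume b u := by
      apply ContinuousOn.intervalIntegrable
      apply hgcont.mono
      rw [Set.uIcc_of_ge hu.2.le]
      exact Set.Icc_subset_Icc hu.1.le le_rfl
    have hmeas : StronglyMeasurableAtFilter g (nhds u) volume :=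
      ⟨Set.Ioo a b, Ioo_mem_nhds hu.1 hu.2,
        (hgcont.mono Set.Ioo_subset_Icc_self).aestronglyMeasurable measurableSet_Ioo⟩
    have dInt : HasDerivAt (fun x => ∫ θ in b..x, g θ) (g u) u :=
      intervalIntegral.integral_hasDerivAt_right hgint' hmeas hgu
    have dF : HasDerivAt F (-(g u)) u := by
      have := dInt.neg
      have e : F = fun x => -∫ θ in b..x, g θ := by
        funext x
        exact intervalIntegral.integral_symm b x
      rw [e]
      exact this
    have := d1.add dF
    convert this using 1
    · rfl
    · simp only [hg, ContinuousLinearMap.mul_apply, ContinuousLinearMap.neg_apply, map_add]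
      abel
  have key := eq_of_hasDerivAt_zero hab hhcont hderiv
  rw [hhb] at key
  rw [key]

/-- **Exact predictor construction.**  Let `D > 0`, `t ∈ ℝ`, `r ∈ ℕ`, and
`0 = s₀ ≤ s₁ ≤ … ≤ s_{r+1} = D`.  For `n = 1,…,r+1` let `Aₙ` be `q × q` real matrices
(viewed as operators on `ℝ^q`) and `Bₙ ∈ ℝ^q`.  Let `U : ℝ → ℝ` be continuous on
`[t−D, t]`, and let `X : ℝ → ℝ^q` be continuous on `[t, t+D]` and, on each open interval
`(t+sₙ₋₁, t+sₙ)`, differentiable with `X′(u) = Aₙ X(u) + U(u−D) Bₙ`.  Then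
`X(t+D) = (∏_{n=1}^{r+1} exp(Aₙ(sₙ−sₙ₋₁))) X(t)
  + ∑_{n=1}^{r+1} (∏_{j=n}^{r} exp(A_{j+1}(s_{j+1}−s_j)))
      ∫_{t−D+sₙ₋₁}^{t−D+sₙ} exp(Aₙ(t−D+sₙ−θ)) U(θ) Bₙ dθ`. -/
theorem stmt3 (q r : ℕ) (D t : ℝ) (hD : 0 < D) (s : ℕ → ℝ)
    (hs0 : s 0 = 0) (hmono : ∀ k, k ≤ r → s k ≤ s (k + 1)) (hsD : s (r + 1) = D)
    (A : ℕ → (EuclideanSpace ℝ (Fin q) →L[ℝ] EuclideanSpace ℝ (Fin q)))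
    (B : ℕ → EuclideanSpace ℝ (Fin q))
    (U : ℝ → ℝ) (hU : ContinuousOn U (Set.Icc (t - D) t))
    (X : ℝ → EuclideanSpace ℝ (Fin q))
    (hX : ContinuousOn X (Set.Icc t (t + D)))
    (hode : ∀ n, 1 ≤ n → n ≤ r + 1 → ∀ u ∈ Set.Ioo (t + s (n - 1)) (t + s n),
      HasDerivAt X (A n (X u) + U (u - D) • B n) u) :
    X (t + D) =
      (dprod (fun n => NormedSpace.exp ((s n - s (n - 1)) • A n)) 1 (r + 1)) (X t) +
        ∑ n ∈ Finset.Icc 1 (r + 1),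
          (dprod (fun j => NormedSpace.exp ((s (j + 1) - s j) • A (j + 1))) n r)
            (∫ θ in (t - D + s (n - 1))..(t - D + s n),
              (NormedSpace.exp ((t - D + s n - θ) • A n)) (U θ • B n)) := by
  classical
  set Mf : ℕ → (EuclideanSpace ℝ (Fin q) →L[ℝ] EuclideanSpace ℝ (Fin q)) :=
    fun n => NormedSpace.exp ((s n - s (n - 1)) • A n) with hMf
  set P : ℕ → (EuclideanSpace ℝ (Fin q) →L[ℝ] EuclideanSpace ℝ (Fin q)) :=
    fun j => NormedSpace.exp ((s (j + 1) - s j) • A (j + 1)) with hP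
  set I : ℕ → EuclideanSpace ℝ (Fin q) := fun n =>
    ∫ θ in (t - D + s (n - 1))..(t - D + s n),
      (NormedSpace.exp ((t - D + s n - θ) • A n)) (U θ • B n) with hI
  have smono : ∀ j, j ≤ r + 1 → ∀ i, i ≤ j → s i ≤ s j := by
    intro j
    induction j with
    | zero => intro _ i hi; have : i = 0 := by omega
              rw [this]
    | succ k ih =>
      intro hk i hi
      rcases Nat.lt_or_ge i (k + 1) with h | h
      · exact le_trans (ih (by omega) i (by omega)) (hmono k (by omega))
      · have : i = k + 1 := by omega
        rw [this]
  have claim : ∀ m, m ≤ r + 1 →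
      X (t + s m) = (dprod Mf 1 m) (X t) +
        ∑ n ∈ Finset.Icc 1 m, (dprod P n (m - 1)) (I n) := by
    intro m
    induction m with
    | zero =>
      intro _
      simp [hs0, dprod_of_lt _ (by norm_num : (0 : ℕ) < 1)]
    | succ k ih =>
      intro hk
      have hk' : k ≤ r := by omega
      have hsk : s k ≤ s (k + 1) := hmono k hk'
      have hab : t + s k ≤ t + s (k + 1) := by linarith
      have h0k : (0 : ℝ) ≤ s k := by
        have := smono k (by omega) 0 (by omega); rw [hs0] at this; exact this
      have hkD : s (k + 1) ≤ D := by
        have := smono (r + 1) le_rfl (k + 1) (by omega); rwa [hsD] at this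
      have hfcont : ContinuousOn (fun u => U (u - D) • B (k + 1))
          (Set.Icc (t + s k) (t + s (k + 1))) := by
        apply ContinuousOn.smul (f := fun u => U (u - D)) (g := fun _ => B (k + 1)) _ continuousOn_const
        apply hU.comp (continuousOn_id.sub continuousOn_const)
        intro u hu
        constructor
        · show t - D ≤ u - D; linarith [hu.1]
        · show u - D ≤ t; linarith [hu.2]
      have hvoc := voc (A (k + 1)) (fun u => U (u - D) • B (k + 1)) X hab hfcont
        (hX.mono (Set.Icc_subset_Icc (by linarith) (by linarith)))
        (fun u hu => by
          have := hode (k + 1) (by omega) (by omega) u (by simpa using hu)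
          simpa using this)
      have e1 : t + s (k + 1) - (t + s k) = s (k + 1) - s k := by ring
      rw [e1] at hvoc
      have e2 : (∫ θ in (t + s k)..(t + s (k + 1)),
            NormedSpace.exp ((t + s (k + 1) - θ) • A (k + 1)) (U (θ - D) • B (k + 1)))
          = I (k + 1) := by
        have hcs := intervalIntegral.integral_comp_sub_right (a := t + s k)
          (b := t + s (k + 1))
          (fun θ => NormedSpace.exp ((t - D + s (k + 1) - θ) • A (k + 1)) (U θ • B (k + 1))) D
        rw [show t + s k - D = t - D + s k by ring,
            show t + s (k + 1) - D = t - D + s (k + 1) by ring] at hcs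
        rw [hI]
        simp only [Nat.add_sub_cancel]
        rw [← hcs]
        apply intervalIntegral.integral_congr
        intro θ _
        show (NormedSpace.exp ((t + s (k + 1) - θ) • A (k + 1))) (U (θ - D) • B (k + 1)) =
          (NormedSpace.exp ((t - D + s (k + 1) - (θ - D)) • A (k + 1))) (U (θ - D) • B (k + 1))
        have h3 : t - D + s (k + 1) - (θ - D) = t + s (k + 1) - θ := by ring
        rw [h3]
      rw [e2] at hvoc
      rw [ih (by omega)] at hvoc
      rw [hvoc]
      have hMP : NormedSpace.exp ((s (k + 1) - s k) • A (k + 1)) = Mf (k + 1) := by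
        rw [hMf]; simp
      have hMPk : Mf (k + 1) = P k := by rw [hMf, hP]; simp
      rw [hMP, map_add, map_sum]
      rw [dprod_succ_top Mf (by omega : 1 ≤ k + 1)]
      rw [Finset.sum_Icc_succ_top (by omega : 1 ≤ k + 1)]
      simp only [Nat.add_sub_cancel, ContinuousLinearMap.mul_apply]
      rw [dprod_of_lt P (by omega : k < k + 1)]
      simp only [ContinuousLinearMap.one_apply]
      rw [add_assoc]
      congr 1
      congr 1
      apply Finset.sum_congr rfl
      intro n hn
      have hn1 : 1 ≤ n := (Finset.mem_Icc.mp hn).1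
      have hnk : n ≤ k := (Finset.mem_Icc.mp hn).2
      obtain ⟨j, rfl⟩ : ∃ j, k = j + 1 := ⟨k - 1, by omega⟩
      rw [dprod_succ_top P (by omega : n ≤ j + 1)]
      simp only [Nat.add_sub_cancel, hMPk, ContinuousLinearMap.mul_apply]
  have final := claim (r + 1) le_rfl
  rw [hsD] at final
  simp only [Nat.add_sub_cancel] at final
  exact final
end

section
/- (Norm equivalency, inverse direction.) With Π and U as defined in the context, |X₀|² + ∫_{t−D}^{t} U(θ)² dθ ≤ ν₁ (|X₀|² + ∫_{t−D}^{t} W(θ)² dθ), where ν₁ = max{ 4 M_K² D e^{2 M_H D} + 1, 4 M_K² D² e^{2 M_H D} M_B² + 2 }. -/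
open MeasureTheory

lemma my_norm_exp_le_s5 {𝔸 : Type*} [NormedRing 𝔸] [NormedAlgebra ℝ 𝔸] [CompleteSpace 𝔸]
    (h1 : ‖(1 : 𝔸)‖ ≤ 1) (x : 𝔸) : ‖NormedSpace.exp x‖ ≤ Real.exp ‖x‖ := by
  have hx : NormedSpace.exp x = ∑' n : ℕ, ((Nat.factorial n : ℝ)⁻¹) • x ^ n := by
    rw [NormedSpace.exp_eq_tsum ℝ]
  have hsum := NormedSpace.norm_expSeries_summable' (𝕂 := ℝ) x
  have hsum2 : Summable fun n : ℕ => ‖x‖ ^ n / (Nat.factorial n) :=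
    Real.summable_pow_div_factorial ‖x‖
  have hexp : Real.exp ‖x‖ = ∑' n : ℕ, ‖x‖ ^ n / (Nat.factorial n) := by
    rw [Real.exp_eq_exp_ℝ, NormedSpace.exp_eq_tsum_div]
  rw [hx, hexp]
  refine le_trans (norm_tsum_le_tsum_norm hsum) (Summable.tsum_le_tsum ?_ hsum hsum2)
  intro n
  rw [norm_smul, norm_inv, Real.norm_natCast, div_eq_inv_mul]
  gcongr
  rcases Nat.eq_zero_or_pos n with h | h
  · simpa [h] using h1
  · exact norm_pow_le' x h

set_option maxHeartbeats 1000000 in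
/-- **Norm equivalency, inverse direction.**  With `Π` defined successively by
the variation-of-constants formula on the intervals `I₀ = [t−D, t+τ−D]`,
`Iₙ = [t+τ−D+sₙ₋₁, t+τ−D+sₙ]` (left endpoints `a₀ = t−D`, `aₙ = t+τ−D+sₙ₋₁`), and
`U(θ) := W(θ) + K·Π(θ)`, one has
`|X₀|² + ∫_{t−D}^{t} U(θ)² dθ ≤ ν₁ (|X₀|² + ∫_{t−D}^{t} W(θ)² dθ)`, where
`ν₁ = max{4 M_K² D e^{2 M_H D} + 1, 4 M_K² D² e^{2 M_H D} M_B² + 2}`. -/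
theorem stmt5 (q r : ℕ) (D t τ MH MB MK : ℝ) (hD : 0 < D)
    (hτ : τ ∈ Set.Icc 0 D) (s : ℕ → ℝ)
    (hs0 : s 0 = 0) (hmono : ∀ k, k ≤ r → s k ≤ s (k + 1)) (hsend : s (r + 1) = D - τ)
    (a : ℕ → ℝ) (ha0 : a 0 = t - D)
    (ha : ∀ n, 1 ≤ n → a n = t + τ - D + s (n - 1))
    (H : ℕ → (EuclideanSpace ℝ (Fin q) →L[ℝ] EuclideanSpace ℝ (Fin q)))
    (Bv : ℕ → EuclideanSpace ℝ (Fin q))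
    (K : EuclideanSpace ℝ (Fin q) →L[ℝ] ℝ)
    (hH : ∀ n, n ≤ r + 1 → ‖H n‖ ≤ MH)
    (hB : ∀ n, n ≤ r + 1 → ‖Bv n‖ ≤ MB)
    (hK : ‖K‖ ≤ MK)
    (X₀ : EuclideanSpace ℝ (Fin q)) (W : ℝ → ℝ)
    (hWint : IntegrableOn W (Set.Icc (t - D) t))
    (hWsq : IntegrableOn (fun θ => W θ ^ 2) (Set.Icc (t - D) t))
    (Pp : ℝ → EuclideanSpace ℝ (Fin q))
    (hPp0 : Pp (t - D) = X₀)
    (hPp : ∀ n, n ≤ r + 1 → ∀ θ ∈ Set.Icc (a n) (a (n + 1)),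
      Pp θ = (NormedSpace.exp ((θ - a n) • H n)) (Pp (a n)) +
        ∫ u in (a n)..θ, (NormedSpace.exp ((θ - u) • H n)) (W u • Bv n))
    (U : ℝ → ℝ)
    (hU : ∀ θ ∈ Set.Icc (t - D) t, U θ = W θ + K (Pp θ)) :
    ‖X₀‖ ^ 2 + ∫ θ in (t - D)..t, U θ ^ 2 ≤
      max (4 * MK ^ 2 * D * Real.exp (2 * MH * D) + 1)
          (4 * MK ^ 2 * D ^ 2 * Real.exp (2 * MH * D) * MB ^ 2 + 2) *
        (‖X₀‖ ^ 2 + ∫ θ in (t - D)..t, W θ ^ 2) := by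
  classical
  obtain ⟨hτ0, hτD⟩ := hτ
  have hMH : 0 ≤ MH := le_trans (norm_nonneg _) (hH 0 (by omega))
  have hMB : 0 ≤ MB := le_trans (norm_nonneg _) (hB 0 (by omega))
  have hMK : 0 ≤ MK := le_trans (norm_nonneg _) hK
  -- monotonicity of s
  have smono' : ∀ j, j ≤ r + 1 → ∀ i, i ≤ j → s i ≤ s j := by
    intro j
    induction j with
    | zero => intro _ i hij; rw [Nat.le_zero.mp hij]
    | succ m ih =>
      intro hj i hij
      rcases Nat.eq_or_lt_of_le hij with h | h
      · rw [h]
      · exact le_trans (ih (by omega) i (by omega)) (hmono m (by omega))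
  have smono : ∀ i j, i ≤ j → j ≤ r + 1 → s i ≤ s j := fun i j hij hj => smono' j hj i hij
  -- location of the points a n
  have haIcc : ∀ n, n ≤ r + 2 → t - D ≤ a n ∧ a n ≤ t := by
    intro n hn
    rcases Nat.eq_zero_or_pos n with h | h
    · rw [h, ha0]; exact ⟨le_refl _, by linarith⟩
    · rw [ha n h]
      have h1 : 0 ≤ s (n - 1) := by
        rw [← hs0]; exact smono 0 (n - 1) (by omega) (by omega)
      have h2 : s (n - 1) ≤ D - τ := by
        rw [← hsend]; exact smono (n - 1) (r + 1) (by omega) (by omega)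
      exact ⟨by linarith, by linarith⟩
  have hamono : ∀ n, n ≤ r + 1 → a n ≤ a (n + 1) := by
    intro n hn
    rcases Nat.eq_zero_or_pos n with h | h
    · subst h
      rw [ha0, ha 1 (le_refl _)]
      simp only [Nat.sub_self, hs0]
      linarith
    · rw [ha n h, ha (n + 1) (by omega)]
      have h2 : s (n - 1) ≤ s n := smono (n - 1) n (by omega) (by omega)
      have : (n + 1) - 1 = n := by omega
      rw [this]
      linarith
  have haend : a (r + 2) = t := by
    rw [ha (r + 2) (by omega)]
    have : (r + 2) - 1 = r + 1 := by omega
    rw [this, hsend]; ring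
  -- integrability facts
  have hle : t - D ≤ t := by linarith
  have hWabs : IntegrableOn (fun u => |W u|) (Set.Icc (t - D) t) := hWint.abs
  have hWabs' : IntegrableOn (fun u => |W u|) (Set.Ioc (t - D) t) :=
    hWabs.mono_set Set.Ioc_subset_Icc_self
  set IW : ℝ := ∫ u in Set.Ioc (t - D) t, |W u| with hIWdef
  have hIWnn : 0 ≤ IW :=
    setIntegral_nonneg measurableSet_Ioc fun _ _ => abs_nonneg _
  set C : ℝ := Real.exp (MH * D) * (‖X₀‖ + MB * IW) with hCdef
  have hCnn : 0 ≤ C := by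
    apply mul_nonneg (Real.exp_nonneg _)
    have := norm_nonneg X₀
    nlinarith
  -- norm of the exponentials
  have hone : ‖(1 : EuclideanSpace ℝ (Fin q) →L[ℝ] EuclideanSpace ℝ (Fin q))‖ ≤ 1 := by
    rw [ContinuousLinearMap.one_def]
    exact ContinuousLinearMap.norm_id_le
  have hopn : ∀ n, n ≤ r + 1 → ∀ c : ℝ, 0 ≤ c →
      ‖NormedSpace.exp (c • H n)‖ ≤ Real.exp (MH * c) := by
    intro n hn c hc
    refine le_trans (my_norm_exp_le_s5 hone _) (Real.exp_le_exp.mpr ?_)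
    rw [norm_smul c (H n), Real.norm_eq_abs, abs_of_nonneg hc]
    calc c * ‖H n‖ ≤ c * MH := mul_le_mul_of_nonneg_left (hH n hn) hc
      _ = MH * c := by ring
  -- the inductive step
  have step : ∀ n, n ≤ r + 1 →
      ‖Pp (a n)‖ ≤ Real.exp (MH * (a n - (t - D))) *
        (‖X₀‖ + MB * ∫ u in Set.Ioc (t - D) (a n), |W u|) →
      ∀ θ ∈ Set.Icc (a n) (a (n + 1)),
        ‖Pp θ‖ ≤ Real.exp (MH * (θ - (t - D))) *
          (‖X₀‖ + MB * ∫ u in Set.Ioc (t - D) θ, |W u|) := by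
    intro n hn hprev θ hθ
    obtain ⟨hθ1, hθ2⟩ := hθ
    have han := haIcc n (by omega)
    have han1 := haIcc (n + 1) (by omega)
    have hθl : t - D ≤ θ := le_trans han.1 hθ1
    have hθr : θ ≤ t := le_trans hθ2 han1.2
    rw [hPp n hn θ ⟨hθ1, hθ2⟩]
    have hIsub : Set.Ioc (a n) θ ⊆ Set.Icc (t - D) t := fun u hu =>
      ⟨le_trans han.1 (le_of_lt hu.1), le_trans hu.2 hθr⟩
    have hWn : IntegrableOn (fun u => |W u|) (Set.Ioc (a n) θ) := hWabs.mono_set hIsub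
    have hWp : IntegrableOn (fun u => |W u|) (Set.Ioc (t - D) (a n)) :=
      hWabs.mono_set fun u hu => ⟨le_of_lt hu.1, le_trans hu.2 han.2⟩
    have hAn : ‖NormedSpace.exp ((θ - a n) • H n) (Pp (a n))‖ ≤
        Real.exp (MH * (θ - a n)) * ‖Pp (a n)‖ :=
      le_trans (ContinuousLinearMap.le_opNorm _ _)
        (mul_le_mul_of_nonneg_right (hopn n hn _ (by linarith)) (norm_nonneg _))
    have hInt : ‖∫ u in (a n)..θ, NormedSpace.exp ((θ - u) • H n) (W u • Bv n)‖ ≤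
        Real.exp (MH * (θ - (t - D))) * MB * ∫ u in Set.Ioc (a n) θ, |W u| := by
      refine le_trans (intervalIntegral.norm_integral_le_integral_norm hθ1) ?_
      rw [intervalIntegral.integral_of_le hθ1]
      have hmono2 : ∫ u in Set.Ioc (a n) θ, ‖NormedSpace.exp ((θ - u) • H n) (W u • Bv n)‖ ≤
          ∫ u in Set.Ioc (a n) θ, Real.exp (MH * (θ - (t - D))) * MB * |W u| := by
        apply integral_mono_of_nonneg
        · exact Filter.Eventually.of_forall fun u => norm_nonneg _
        · exact (hWn.const_mul _)
        · filter_upwards [ae_restrict_mem measurableSet_Ioc] with u hu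
          have hu1 : t - D ≤ u := le_trans han.1 (le_of_lt hu.1)
          have hu2 : u ≤ θ := hu.2
          calc ‖NormedSpace.exp ((θ - u) • H n) (W u • Bv n)‖
              ≤ ‖NormedSpace.exp ((θ - u) • H n)‖ * ‖W u • Bv n‖ :=
                ContinuousLinearMap.le_opNorm _ _
            _ ≤ Real.exp (MH * (θ - u)) * (|W u| * MB) := by
                apply mul_le_mul (hopn n hn _ (by linarith)) ?_ (norm_nonneg _)
                  (Real.exp_nonneg _)
                rw [norm_smul (W u) (Bv n), Real.norm_eq_abs]
                exact mul_le_mul_of_nonneg_left (hB n hn) (abs_nonneg _)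
            _ ≤ Real.exp (MH * (θ - (t - D))) * MB * |W u| := by
                have h1 : Real.exp (MH * (θ - u)) ≤ Real.exp (MH * (θ - (t - D))) := by
                  apply Real.exp_le_exp.mpr
                  nlinarith
                nlinarith [abs_nonneg (W u), Real.exp_nonneg (MH * (θ - u)),
                  mul_le_mul_of_nonneg_right h1 (mul_nonneg (abs_nonneg (W u)) hMB)]
      refine le_trans hmono2 (le_of_eq ?_)
      rw [MeasureTheory.integral_const_mul]
    calc ‖NormedSpace.exp ((θ - a n) • H n) (Pp (a n)) +
          ∫ u in (a n)..θ, NormedSpace.exp ((θ - u) • H n) (W u • Bv n)‖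
        ≤ ‖NormedSpace.exp ((θ - a n) • H n) (Pp (a n))‖ +
          ‖∫ u in (a n)..θ, NormedSpace.exp ((θ - u) • H n) (W u • Bv n)‖ := norm_add_le _ _
      _ ≤ Real.exp (MH * (θ - a n)) * ‖Pp (a n)‖ +
          Real.exp (MH * (θ - (t - D))) * MB * ∫ u in Set.Ioc (a n) θ, |W u| :=
        add_le_add hAn hInt
      _ ≤ Real.exp (MH * (θ - a n)) * (Real.exp (MH * (a n - (t - D))) *
            (‖X₀‖ + MB * ∫ u in Set.Ioc (t - D) (a n), |W u|)) +
          Real.exp (MH * (θ - (t - D))) * MB * ∫ u in Set.Ioc (a n) θ, |W u| :=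
        add_le_add (mul_le_mul_of_nonneg_left hprev (Real.exp_nonneg _)) le_rfl
      _ = Real.exp (MH * (θ - (t - D))) * (‖X₀‖ + MB *
            ((∫ u in Set.Ioc (t - D) (a n), |W u|) + ∫ u in Set.Ioc (a n) θ, |W u|)) := by
          rw [← mul_assoc, ← Real.exp_add]
          ring_nf
      _ = Real.exp (MH * (θ - (t - D))) * (‖X₀‖ + MB * ∫ u in Set.Ioc (t - D) θ, |W u|) := by
          congr 2
          rw [← MeasureTheory.setIntegral_union (Set.Ioc_disjoint_Ioc_of_le le_rfl)
            measurableSet_Ioc hWp hWn, Set.Ioc_union_Ioc_eq_Ioc han.1 hθ1]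
  -- the key bound by induction
  have key : ∀ n, n ≤ r + 1 → ∀ θ ∈ Set.Icc (a n) (a (n + 1)),
      ‖Pp θ‖ ≤ Real.exp (MH * (θ - (t - D))) *
        (‖X₀‖ + MB * ∫ u in Set.Ioc (t - D) θ, |W u|) := by
    intro n
    induction n with
    | zero =>
      intro hn
      apply step 0 hn
      rw [ha0, hPp0]
      simp [Set.Ioc_self, sub_self, Real.exp_zero]
    | succ m ih =>
      intro hn
      apply step (m + 1) hn
      exact ih (by omega) (a (m + 1)) ⟨hamono m (by omega), le_refl _⟩
  -- coverage of [t-D, t] by the intervals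
  have cover : ∀ θ, θ ∈ Set.Icc (t - D) t →
      ∃ n, n ≤ r + 1 ∧ θ ∈ Set.Icc (a n) (a (n + 1)) := by
    intro θ hθ
    have hP0 : a 0 ≤ θ := by rw [ha0]; exact hθ.1
    set P : ℕ → Prop := fun m => a m ≤ θ with hPdef
    have h1 : P (Nat.findGreatest P (r + 1)) :=
      Nat.findGreatest_spec (P := P) (Nat.zero_le _) hP0
    refine ⟨Nat.findGreatest P (r + 1), Nat.findGreatest_le _, ⟨h1, ?_⟩⟩
    by_cases hc : Nat.findGreatest P (r + 1) = r + 1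
    · rw [hc, ← haend] at *
      exact hθ.2
    · have hlt : Nat.findGreatest P (r + 1) < r + 1 :=
        lt_of_le_of_ne (Nat.findGreatest_le _) hc
      have hng := Nat.findGreatest_is_greatest
        (Nat.lt_succ_self (Nat.findGreatest P (r + 1))) (by omega)
      exact le_of_not_ge hng
  -- uniform pointwise bound on Pp
  have ptBound : ∀ θ ∈ Set.Icc (t - D) t, ‖Pp θ‖ ≤ C := by
    intro θ hθ
    obtain ⟨n, hn, hθn⟩ := cover θ hθ
    refine le_trans (key n hn θ hθn) ?_
    have h1 : Real.exp (MH * (θ - (t - D))) ≤ Real.exp (MH * D) :=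
      Real.exp_le_exp.mpr (by nlinarith [hθ.2])
    have h2 : (∫ u in Set.Ioc (t - D) θ, |W u|) ≤ IW := by
      apply setIntegral_mono_set hWabs'
        (Filter.Eventually.of_forall fun u => abs_nonneg _)
      exact HasSubset.Subset.eventuallyLE (Set.Ioc_subset_Ioc_right hθ.2)
    have h3 : 0 ≤ ∫ u in Set.Ioc (t - D) θ, |W u| :=
      setIntegral_nonneg measurableSet_Ioc fun _ _ => abs_nonneg _
    rw [hCdef]
    apply mul_le_mul h1 _ _ (Real.exp_nonneg _)
    · nlinarith
    · nlinarith [norm_nonneg X₀]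
  -- integrability over Ioc
  have hWint' : IntegrableOn W (Set.Ioc (t - D) t) := hWint.mono_set Set.Ioc_subset_Icc_self
  have hWsq' : IntegrableOn (fun θ => W θ ^ 2) (Set.Ioc (t - D) t) :=
    hWsq.mono_set Set.Ioc_subset_Icc_self
  set SW : ℝ := ∫ u in Set.Ioc (t - D) t, W u ^ 2 with hSWdef
  have hSWnn : 0 ≤ SW := setIntegral_nonneg measurableSet_Ioc fun _ _ => sq_nonneg _
  have hvol : (volume (Set.Ioc (t - D) t)).toReal = D := by
    rw [Real.volume_Ioc]
    rw [show t - (t - D) = D by ring, ENNReal.toReal_ofReal (le_of_lt hD)]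
  -- bound on the integral of U²
  have hUb : (∫ θ in (t - D)..t, U θ ^ 2) ≤ 2 * SW + 2 * (MK * C) ^ 2 * D := by
    rw [intervalIntegral.integral_of_le hle]
    have hmono3 : (∫ θ in Set.Ioc (t - D) t, U θ ^ 2) ≤
        ∫ θ in Set.Ioc (t - D) t, (2 * W θ ^ 2 + 2 * (MK * C) ^ 2) := by
      apply integral_mono_of_nonneg
      · exact Filter.Eventually.of_forall fun θ => sq_nonneg _
      · exact (hWsq'.const_mul 2).add
          (integrableOn_const measure_Ioc_lt_top.ne)
      · filter_upwards [ae_restrict_mem measurableSet_Ioc] with θ hθ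
        have hθ' : θ ∈ Set.Icc (t - D) t := Set.Ioc_subset_Icc_self hθ
        rw [hU θ hθ']
        have h1 : |K (Pp θ)| ≤ MK * C := by
          refine le_trans (le_of_eq (Real.norm_eq_abs _).symm) ?_
          refine le_trans (K.le_opNorm _) ?_
          exact mul_le_mul hK (ptBound θ hθ') (norm_nonneg _) hMK
        have h2 : (K (Pp θ)) ^ 2 ≤ (MK * C) ^ 2 := by
          rw [← sq_abs]
          exact pow_le_pow_left₀ (abs_nonneg _) h1 2
        nlinarith [sq_nonneg (W θ - K (Pp θ))]
    refine le_trans hmono3 (le_of_eq ?_)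
    rw [MeasureTheory.integral_add (hWsq'.const_mul 2)
      (integrableOn_const measure_Ioc_lt_top.ne),
      MeasureTheory.integral_const_mul, MeasureTheory.setIntegral_const, smul_eq_mul, Measure.real, hvol]
    ring
  -- Cauchy-Schwarz : IW² ≤ D * SW
  have hCS : IW ^ 2 ≤ D * SW := by
    haveI hfin : IsFiniteMeasure (volume.restrict (Set.Ioc (t - D) t)) :=
      ⟨by rw [Measure.restrict_apply_univ]; exact measure_Ioc_lt_top⟩
    have hpq : (2 : ℝ).HolderConjugate 2 := Real.HolderConjugate.two_two
    have hof : ENNReal.ofReal (2 : ℝ) = 2 := by norm_num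
    have hmemW : MemLp W 2 (volume.restrict (Set.Ioc (t - D) t)) :=
      (memLp_two_iff_integrable_sq hWint'.aestronglyMeasurable).mpr hWsq'
    have hmemWa : MemLp (fun x => |W x|) (ENNReal.ofReal 2)
        (volume.restrict (Set.Ioc (t - D) t)) := by
      rw [hof]
      simpa [Real.norm_eq_abs] using hmemW.norm
    have hmem1 : MemLp (fun _ : ℝ => (1 : ℝ)) (ENNReal.ofReal 2)
        (volume.restrict (Set.Ioc (t - D) t)) := memLp_const 1
    have hCS0 := integral_mul_le_Lp_mul_Lq_of_nonneg hpq
      (Filter.Eventually.of_forall fun x => abs_nonneg (W x))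
      (Filter.Eventually.of_forall fun _ => zero_le_one) hmemWa hmem1
    have hr2 : ∀ x : ℝ, x ^ (2 : ℝ) = x ^ 2 := fun x => by
      rw [show (2 : ℝ) = ((2 : ℕ) : ℝ) by norm_num, Real.rpow_natCast]
    simp only [mul_one, hr2, sq_abs, one_pow] at hCS0
    rw [MeasureTheory.integral_const, smul_eq_mul, mul_one, measureReal_restrict_apply_univ, Measure.real, hvol] at hCS0
    have hsq : IW ^ 2 ≤ (SW ^ ((1:ℝ)/2) * D ^ ((1:ℝ)/2)) ^ 2 :=
      pow_le_pow_left₀ hIWnn hCS0 2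
    refine le_trans hsq (le_of_eq ?_)
    rw [mul_pow, ← Real.rpow_natCast (SW ^ ((1:ℝ)/2)) 2, ← Real.rpow_natCast (D ^ ((1:ℝ)/2)) 2,
      ← Real.rpow_mul hSWnn, ← Real.rpow_mul (le_of_lt hD)]
    norm_num [mul_comm]
  -- bound on C²
  have hE2 : (Real.exp (MH * D)) ^ 2 = Real.exp (2 * MH * D) := by
    rw [sq, ← Real.exp_add]; ring_nf
  have hCsq : C ^ 2 ≤ 2 * Real.exp (2 * MH * D) * (‖X₀‖ ^ 2 + MB ^ 2 * IW ^ 2) := by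
    have hCeq : C ^ 2 = Real.exp (2 * MH * D) * (‖X₀‖ + MB * IW) ^ 2 := by
      rw [hCdef, mul_pow, hE2]
    rw [hCeq]
    nlinarith [sq_nonneg (‖X₀‖ - MB * IW), Real.exp_pos (2 * MH * D)]
  have hC2 : C ^ 2 ≤ 2 * Real.exp (2 * MH * D) * (‖X₀‖ ^ 2 + MB ^ 2 * (D * SW)) := by
    refine le_trans hCsq ?_
    nlinarith [mul_nonneg (sq_nonneg MB) (sub_nonneg.mpr hCS), Real.exp_pos (2 * MH * D)]
  have h4 : 2 * MK ^ 2 * D * C ^ 2 ≤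
      2 * MK ^ 2 * D * (2 * Real.exp (2 * MH * D) * (‖X₀‖ ^ 2 + MB ^ 2 * (D * SW))) :=
    mul_le_mul_of_nonneg_left hC2 (by positivity)
  -- finish
  have hWgoal : (∫ θ in (t - D)..t, W θ ^ 2) = SW := intervalIntegral.integral_of_le hle
  rw [hWgoal]
  have hν1 : 4 * MK ^ 2 * D * Real.exp (2 * MH * D) + 1 ≤
      max (4 * MK ^ 2 * D * Real.exp (2 * MH * D) + 1)
          (4 * MK ^ 2 * D ^ 2 * Real.exp (2 * MH * D) * MB ^ 2 + 2) := le_max_left _ _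
  have hν2 : 4 * MK ^ 2 * D ^ 2 * Real.exp (2 * MH * D) * MB ^ 2 + 2 ≤
      max (4 * MK ^ 2 * D * Real.exp (2 * MH * D) + 1)
          (4 * MK ^ 2 * D ^ 2 * Real.exp (2 * MH * D) * MB ^ 2 + 2) := le_max_right _ _
  nlinarith [hUb, h4, sq_nonneg ‖X₀‖, hSWnn,
    mul_nonneg (sub_nonneg.mpr hν1) (sq_nonneg ‖X₀‖),
    mul_nonneg (sub_nonneg.mpr hν2) hSWnn]
end

section
/- (Bound on the integral-terms mismatch Δ₂.) With Δ₂ as defined in the context, |Δ₂| ≤ e^{(M̄_A + ε_A)(D−τ)} [ (ε_B + 2 ε_A (D−τ) M̄_B) M_K + M̄_B ε_K ] ∫_{t+τ−D}^{t} |U(θ)| dθ. -/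
open MeasureTheory

set_option maxHeartbeats 1000000

namespace Stmt9Aux

variable {E : Type*} [NormedAddCommGroup E] [NormedSpace ℝ E] [CompleteSpace E]

lemma norm_one_le' : ‖(1 : E →L[ℝ] E)‖ ≤ 1 := ContinuousLinearMap.norm_id_le

lemma norm_pow_le' {T : E →L[ℝ] E} {M : ℝ} (h : ‖T‖ ≤ M) : ∀ n, ‖T ^ n‖ ≤ M ^ n
  | 0 => by simpa using norm_one_le'
  | (n+1) => by
    have hM : 0 ≤ M := (norm_nonneg T).trans h
    calc ‖T ^ (n+1)‖ = ‖T ^ n * T‖ := by rw [pow_succ]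
      _ ≤ ‖T ^ n‖ * ‖T‖ := norm_mul_le _ _
      _ ≤ M ^ n * M := by
          exact mul_le_mul (norm_pow_le' h n) h (norm_nonneg _) (pow_nonneg hM n)
      _ = M ^ (n+1) := (pow_succ M n).symm

lemma norm_pow_sub_pow_le' {X Y : E →L[ℝ] E} {M : ℝ} (hX : ‖X‖ ≤ M) (hY : ‖Y‖ ≤ M) :
    ∀ n : ℕ, ‖X ^ (n+1) - Y ^ (n+1)‖ ≤ ((n:ℝ)+1) * ‖X - Y‖ * M ^ n
  | 0 => by simp
  | (n+1) => by
    have hM : 0 ≤ M := (norm_nonneg X).trans hX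
    have key : X ^ (n+2) - Y ^ (n+2) = X * (X ^ (n+1) - Y ^ (n+1)) + (X - Y) * Y ^ (n+1) := by
      have hx : X ^ (n+2) = X * X ^ (n+1) := (pow_succ' X (n+1))
      have hy : Y ^ (n+2) = Y * Y ^ (n+1) := (pow_succ' Y (n+1))
      rw [hx, hy]; noncomm_ring
    calc ‖X ^ (n+2) - Y ^ (n+2)‖
        ≤ ‖X * (X ^ (n+1) - Y ^ (n+1))‖ + ‖(X - Y) * Y ^ (n+1)‖ := by
          rw [key]; exact norm_add_le _ _
      _ ≤ ‖X‖ * ‖X ^ (n+1) - Y ^ (n+1)‖ + ‖X - Y‖ * ‖Y ^ (n+1)‖ :=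
          add_le_add (norm_mul_le _ _) (norm_mul_le _ _)
      _ ≤ M * (((n:ℝ)+1) * ‖X - Y‖ * M ^ n) + ‖X - Y‖ * M ^ (n+1) := by
          have h1 := norm_pow_sub_pow_le' hX hY n
          have h2 := norm_pow_le' hY (n+1)
          have h3 := norm_nonneg (X - Y)
          have h4 := norm_nonneg (X ^ (n+1) - Y ^ (n+1))
          have h5 := norm_nonneg X
          have h6 : (0:ℝ) ≤ M ^ n := pow_nonneg hM n
          nlinarith [mul_le_mul hX h1 h4 hM, mul_le_mul_of_nonneg_left h2 h3]
      _ = (((n+1:ℕ):ℝ)+1) * ‖X - Y‖ * M ^ (n+1) := by push_cast; ring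


lemma real_exp_eq_tsum (M : ℝ) : Real.exp M = ∑' n : ℕ, M ^ n / (Nat.factorial n) := by
  rw [Real.exp_eq_exp_ℝ, NormedSpace.exp_eq_tsum_div]

lemma norm_exp_le' {X : E →L[ℝ] E} {M : ℝ} (hX : ‖X‖ ≤ M) :
    ‖NormedSpace.exp X‖ ≤ Real.exp M := by
  have hM : 0 ≤ M := (norm_nonneg X).trans hX
  have hsum : HasSum (fun n : ℕ => M ^ n / (Nat.factorial n)) (Real.exp M) :=
    (real_exp_eq_tsum M ▸ (Real.summable_pow_div_factorial M).hasSum)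
  rw [NormedSpace.exp_eq_tsum (𝕂 := ℝ)]
  refine tsum_of_norm_bounded hsum fun n => ?_
  rw [norm_smul]
  have h1 : ‖X ^ n‖ ≤ M ^ n := norm_pow_le' hX n
  have h2 : ‖(((Nat.factorial n : ℝ))⁻¹)‖ = (((Nat.factorial n : ℝ)))⁻¹ := by
    rw [Real.norm_eq_abs, abs_of_nonneg (by positivity)]
  rw [h2, div_eq_inv_mul]
  exact mul_le_mul_of_nonneg_left h1 (by positivity)

lemma norm_exp_sub_exp_le' {X Y : E →L[ℝ] E} {M : ℝ} (hX : ‖X‖ ≤ M) (hY : ‖Y‖ ≤ M) :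
    ‖NormedSpace.exp X - NormedSpace.exp Y‖ ≤ ‖X - Y‖ * Real.exp M := by
  have hM : 0 ≤ M := (norm_nonneg X).trans hX
  set δ := ‖X - Y‖ with hδ
  have hδ0 : 0 ≤ δ := norm_nonneg _
  set g : ℕ → ℝ := fun n => Nat.casesOn n 0 (fun k => δ * (M ^ k / (Nat.factorial k))) with hg
  have hg1 : Summable (fun k : ℕ => δ * (M ^ k / (Nat.factorial k))) :=
    (Real.summable_pow_div_factorial M).mul_left δ
  have hgs : Summable g := by
    rw [← summable_nat_add_iff 1]
    exact hg1
  have hgsum : (∑' n, g n) = δ * Real.exp M := by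
    rw [Summable.tsum_eq_zero_add hgs]
    show 0 + (∑' k : ℕ, δ * (M ^ k / (Nat.factorial k))) = δ * Real.exp M
    rw [zero_add, tsum_mul_left, ← real_exp_eq_tsum]
  have hX' := NormedSpace.expSeries_summable' (𝕂 := ℝ) X
  have hY' := NormedSpace.expSeries_summable' (𝕂 := ℝ) Y
  have key : NormedSpace.exp X - NormedSpace.exp Y
      = ∑' n : ℕ, (((Nat.factorial n : ℝ))⁻¹ • (X ^ n - Y ^ n)) := by
    simp only [NormedSpace.exp_eq_tsum (𝕂 := ℝ)]
    rw [← Summable.tsum_sub hX' hY']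
    congr 1; funext n; rw [smul_sub]
  rw [key, ← hgsum]
  refine tsum_of_norm_bounded hgs.hasSum fun n => ?_
  cases n with
  | zero => simp [hg]
  | succ k =>
    have h1 : ‖X ^ (k+1) - Y ^ (k+1)‖ ≤ ((k:ℝ)+1) * δ * M ^ k :=
      norm_pow_sub_pow_le' hX hY k
    have h2 : ‖(((Nat.factorial (k+1) : ℝ))⁻¹)‖ = (((Nat.factorial (k+1) : ℝ)))⁻¹ := by
      rw [Real.norm_eq_abs, abs_of_nonneg (by positivity)]
    show ‖((Nat.factorial (k+1) : ℝ))⁻¹ • (X ^ (k+1) - Y ^ (k+1))‖ ≤ δ * (M ^ k / (Nat.factorial k))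
    have hfac : ((Nat.factorial (k+1) : ℝ)) = ((k:ℝ)+1) * ((Nat.factorial k : ℝ)) := by
      rw [Nat.factorial_succ]; push_cast; ring
    calc ‖((Nat.factorial (k+1) : ℝ))⁻¹ • (X ^ (k+1) - Y ^ (k+1))‖
        ≤ ‖((Nat.factorial (k+1) : ℝ))⁻¹‖ * ‖X ^ (k+1) - Y ^ (k+1)‖ := ContinuousLinearMap.opNorm_smul_le _ _
      _ = ((Nat.factorial (k+1) : ℝ))⁻¹ * ‖X ^ (k+1) - Y ^ (k+1)‖ := by rw [h2]
      _ ≤ ((Nat.factorial (k+1) : ℝ))⁻¹ * (((k:ℝ)+1) * δ * M ^ k) :=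
          mul_le_mul_of_nonneg_left h1 (by positivity)
      _ = δ * (M ^ k / (Nat.factorial k)) := by
          rw [hfac]; field_simp


lemma list_sum_nonneg' (d : ℕ → ℝ) : ∀ l : List ℕ, (∀ i ∈ l, 0 ≤ d i) → 0 ≤ (l.map d).sum
  | [], _ => by simp
  | x :: l, h => by
    simp only [List.map_cons, List.sum_cons]
    have h1 := h x (by simp)
    have h2 := list_sum_nonneg' d l (fun i hi => h i (by simp [hi]))
    linarith

lemma list_prod_nonneg' (e : ℕ → ℝ) : ∀ l : List ℕ, (∀ i ∈ l, 0 ≤ e i) → 0 ≤ (l.map e).prod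
  | [], _ => by simp
  | x :: l, h => by
    simp only [List.map_cons, List.prod_cons]
    exact mul_nonneg (h x (by simp)) (list_prod_nonneg' e l (fun i hi => h i (by simp [hi])))

lemma list_prod_norm_le' (C : ℕ → E →L[ℝ] E) (e : ℕ → ℝ) :
    ∀ l : List ℕ, (∀ i ∈ l, ‖C i‖ ≤ e i) → ‖(l.map C).prod‖ ≤ (l.map e).prod
  | [], _ => by simpa using norm_one_le'
  | x :: l, h => by
    simp only [List.map_cons, List.prod_cons]
    have h1 := h x (by simp)
    have h2 := list_prod_norm_le' C e l (fun i hi => h i (by simp [hi]))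
    calc ‖C x * (l.map C).prod‖ ≤ ‖C x‖ * ‖(l.map C).prod‖ := norm_mul_le _ _
      _ ≤ e x * (l.map e).prod :=
          mul_le_mul h1 h2 (norm_nonneg _) ((norm_nonneg _).trans h1)

lemma list_prod_sub_le' (C C' : ℕ → E →L[ℝ] E) (e d : ℕ → ℝ) :
    ∀ l : List ℕ, (∀ i ∈ l, ‖C i‖ ≤ e i ∧ ‖C' i‖ ≤ e i ∧ ‖C i - C' i‖ ≤ d i * e i ∧ 0 ≤ d i) →
    ‖(l.map C).prod - (l.map C').prod‖ ≤ (l.map d).sum * (l.map e).prod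
  | [], _ => by simp
  | x :: l, h => by
    obtain ⟨h1, h2, h3, h4⟩ := h x (by simp)
    have hl : ∀ i ∈ l, ‖C i‖ ≤ e i ∧ ‖C' i‖ ≤ e i ∧ ‖C i - C' i‖ ≤ d i * e i ∧ 0 ≤ d i :=
      fun i hi => h i (by simp [hi])
    have ih := list_prod_sub_le' C C' e d l hl
    have hPn : ‖(l.map C).prod‖ ≤ (l.map e).prod :=
      list_prod_norm_le' C e l (fun i hi => (hl i hi).1)
    have hep : 0 ≤ (l.map e).prod :=
      list_prod_nonneg' e l (fun i hi => (norm_nonneg (C i)).trans (hl i hi).1)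
    have hds : 0 ≤ (l.map d).sum := list_sum_nonneg' d l (fun i hi => (hl i hi).2.2.2)
    have hex : 0 ≤ e x := (norm_nonneg _).trans h1
    simp only [List.map_cons, List.prod_cons, List.sum_cons]
    have key : C x * (l.map C).prod - C' x * (l.map C').prod
        = (C x - C' x) * (l.map C).prod + C' x * ((l.map C).prod - (l.map C').prod) := by
      noncomm_ring
    calc ‖C x * (l.map C).prod - C' x * (l.map C').prod‖
        ≤ ‖(C x - C' x) * (l.map C).prod‖ + ‖C' x * ((l.map C).prod - (l.map C').prod)‖ := by
          rw [key]; exact norm_add_le _ _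
      _ ≤ (d x * e x) * (l.map e).prod + e x * ((l.map d).sum * (l.map e).prod) := by
          refine add_le_add ?_ ?_
          · exact (norm_mul_le _ _).trans
              (mul_le_mul h3 hPn (norm_nonneg _) (mul_nonneg h4 hex))
          · exact (norm_mul_le _ _).trans
              (mul_le_mul h2 ih (norm_nonneg _) hex)
      _ = (d x + (l.map d).sum) * (e x * (l.map e).prod) := by ring

lemma list_map_exp_prod (f : ℕ → ℝ) :
    ∀ l : List ℕ, (l.map fun j => Real.exp (f j)).prod = Real.exp ((l.map f).sum)
  | [] => by simp
  | x :: l => by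
    simp only [List.map_cons, List.prod_cons, List.sum_cons, Real.exp_add,
      list_map_exp_prod f l]

lemma range'_telescope (s : ℕ → ℝ) :
    ∀ (m a : ℕ), ((List.range' a m).map (fun j => s (j+1) - s j)).sum = s (a+m) - s a
  | 0, a => by simp
  | (m+1), a => by
    rw [List.range'_succ]
    simp only [List.map_cons, List.sum_cons, range'_telescope s m (a+1)]
    have : a + 1 + m = a + (m+1) := by omega
    rw [this]; ring

lemma list_map_mul_left' (c : ℝ) (f : ℕ → ℝ) :
    ∀ l : List ℕ, (l.map fun j => c * f j).sum = c * (l.map f).sum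
  | [] => by simp
  | x :: l => by
    simp only [List.map_cons, List.sum_cons, list_map_mul_left' c f l]; ring


lemma range'_eprod (e : ℕ → ℝ) (n m : ℕ) :
    (((List.range' n m).reverse.map e)).prod = ((List.range' n m).map e).prod := by
  rw [List.map_reverse, List.prod_reverse]

lemma range'_esum (e : ℕ → ℝ) (n m : ℕ) :
    (((List.range' n m).reverse.map e)).sum = ((List.range' n m).map e).sum := by
  rw [List.map_reverse, List.sum_reverse]

lemma exp_smul_norm_le {T : E →L[ℝ] E} {MA h : ℝ} (hT : ‖T‖ ≤ MA) (hh : 0 ≤ h) :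
    ‖NormedSpace.exp (h • T)‖ ≤ Real.exp (MA * h) := by
  refine norm_exp_le' ?_
  calc ‖h • T‖ ≤ ‖h‖ * ‖T‖ := ContinuousLinearMap.opNorm_smul_le _ _
    _ = h * ‖T‖ := by rw [Real.norm_eq_abs, abs_of_nonneg hh]
    _ ≤ MA * h := by
        rw [mul_comm]
        exact mul_le_mul_of_nonneg_right hT hh

lemma exp_smul_sub_le {T T' : E →L[ℝ] E} {MA εA h : ℝ} (hT : ‖T‖ ≤ MA) (hT' : ‖T'‖ ≤ MA)
    (hd : ‖T - T'‖ ≤ εA) (hh : 0 ≤ h) :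
    ‖NormedSpace.exp (h • T) - NormedSpace.exp (h • T')‖
      ≤ (εA * h) * Real.exp (MA * h) := by
  have hb : ∀ S : E →L[ℝ] E, ‖S‖ ≤ MA → ‖h • S‖ ≤ MA * h := fun S hS => by
    calc ‖h • S‖ ≤ ‖h‖ * ‖S‖ := ContinuousLinearMap.opNorm_smul_le _ _
      _ = h * ‖S‖ := by rw [Real.norm_eq_abs, abs_of_nonneg hh]
      _ ≤ MA * h := by rw [mul_comm]; exact mul_le_mul_of_nonneg_right hS hh
  refine (norm_exp_sub_exp_le' (hb T hT) (hb T' hT')).trans ?_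
  refine mul_le_mul_of_nonneg_right ?_ (Real.exp_nonneg _)
  calc ‖h • T - h • T'‖ = ‖h • (T - T')‖ := by rw [smul_sub]
    _ ≤ ‖h‖ * ‖T - T'‖ := ContinuousLinearMap.opNorm_smul_le _ _
    _ = h * ‖T - T'‖ := by rw [Real.norm_eq_abs, abs_of_nonneg hh]
    _ ≤ εA * h := by rw [mul_comm]; exact mul_le_mul_of_nonneg_right hd hh

lemma dprod_exp_norm_le (s : ℕ → ℝ) (MA : ℝ) (hMA : 0 ≤ MA)
    (A' : ℕ → E →L[ℝ] E) (n r : ℕ) (hn : n ≤ r + 1)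
    (hA' : ∀ i, n ≤ i → i ≤ r → ‖A' i‖ ≤ MA)
    (hmono : ∀ i, n ≤ i → i ≤ r → s i ≤ s (i + 1)) :
    ‖dprod (fun j => NormedSpace.exp ((s (j + 1) - s j) • A' j)) n r‖
      ≤ Real.exp (MA * (s (r + 1) - s n)) := by
  have hmem : ∀ i ∈ (List.range' n (r + 1 - n)).reverse, n ≤ i ∧ i ≤ r := by
    intro i hi
    rw [List.mem_reverse, List.mem_range'_1] at hi
    omega
  have hbd : ∀ i ∈ (List.range' n (r + 1 - n)).reverse,
      ‖NormedSpace.exp ((s (i + 1) - s i) • A' i)‖ ≤ Real.exp (MA * (s (i + 1) - s i)) := by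
    intro i hi
    obtain ⟨h1, h2⟩ := hmem i hi
    exact exp_smul_norm_le (hA' i h1 h2) (sub_nonneg.mpr (hmono i h1 h2))
  refine (list_prod_norm_le' _ _ _ hbd).trans ?_
  rw [show (fun j => Real.exp (MA * (s (j + 1) - s j)))
      = fun j => Real.exp ((fun j => MA * (s (j + 1) - s j)) j) from rfl]
  rw [range'_eprod, list_map_exp_prod, list_map_mul_left',
    range'_telescope, show n + (r + 1 - n) = r + 1 from by omega]

lemma dprod_exp_sub_le (s : ℕ → ℝ) (MA εA : ℝ) (hMA : 0 ≤ MA)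
    (Abar : E →L[ℝ] E) (A' : ℕ → E →L[ℝ] E) (n r : ℕ) (hn : n ≤ r + 1)
    (hAb : ‖Abar‖ ≤ MA)
    (hA' : ∀ i, n ≤ i → i ≤ r → ‖A' i‖ ≤ MA)
    (hAd : ∀ i, n ≤ i → i ≤ r → ‖Abar - A' i‖ ≤ εA)
    (hεA : 0 ≤ εA)
    (hmono : ∀ i, n ≤ i → i ≤ r → s i ≤ s (i + 1)) :
    ‖dprod (fun j => NormedSpace.exp ((s (j + 1) - s j) • Abar)) n r
        - dprod (fun j => NormedSpace.exp ((s (j + 1) - s j) • A' j)) n r‖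
      ≤ (εA * (s (r + 1) - s n)) * Real.exp (MA * (s (r + 1) - s n)) := by
  have hmem : ∀ i ∈ (List.range' n (r + 1 - n)).reverse, n ≤ i ∧ i ≤ r := by
    intro i hi
    rw [List.mem_reverse, List.mem_range'_1] at hi
    omega
  set e : ℕ → ℝ := fun j => Real.exp (MA * (s (j + 1) - s j)) with he
  set d : ℕ → ℝ := fun j => εA * (s (j + 1) - s j) with hd
  have hbd : ∀ i ∈ (List.range' n (r + 1 - n)).reverse,
      ‖NormedSpace.exp ((s (i + 1) - s i) • Abar)‖ ≤ e i ∧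
      ‖NormedSpace.exp ((s (i + 1) - s i) • A' i)‖ ≤ e i ∧
      ‖NormedSpace.exp ((s (i + 1) - s i) • Abar)
        - NormedSpace.exp ((s (i + 1) - s i) • A' i)‖ ≤ d i * e i ∧ 0 ≤ d i := by
    intro i hi
    obtain ⟨h1, h2⟩ := hmem i hi
    have hh : 0 ≤ s (i + 1) - s i := sub_nonneg.mpr (hmono i h1 h2)
    refine ⟨exp_smul_norm_le hAb hh, exp_smul_norm_le (hA' i h1 h2) hh, ?_, ?_⟩
    · have := exp_smul_sub_le hAb (hA' i h1 h2) (hAd i h1 h2) hh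
      simpa [he, hd, mul_assoc] using this
    · exact mul_nonneg hεA hh
  refine (list_prod_sub_le' _ _ e d _ hbd).trans ?_
  have hsum : ((List.range' n (r + 1 - n)).reverse.map d).sum = εA * (s (r + 1) - s n) := by
    rw [range'_esum, hd, list_map_mul_left', range'_telescope,
      show n + (r + 1 - n) = r + 1 from by omega]
  have hprod : ((List.range' n (r + 1 - n)).reverse.map e).prod
      = Real.exp (MA * (s (r + 1) - s n)) := by
    rw [range'_eprod, he]
    rw [show (fun j => Real.exp (MA * (s (j + 1) - s j)))
        = fun j => Real.exp ((fun j => MA * (s (j + 1) - s j)) j) from rfl]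
    rw [list_map_exp_prod, list_map_mul_left',
      range'_telescope, show n + (r + 1 - n) = r + 1 from by omega]
  rw [hsum, hprod]

end Stmt9Aux


open Stmt9Aux

/-- **Bound on the integral-terms mismatch Δ₂.**  With `Δ₂` as in the context,
`|Δ₂| ≤ e^{(M̄_A + ε_A)(D−τ)} [(ε_B + 2 ε_A (D−τ) M̄_B) M_K + M̄_B ε_K] ∫_{t+τ−D}^{t} |U(θ)| dθ`. -/
theorem stmt9 (q r : ℕ) (D t τ εA εB εK MAbar MBbar MK : ℝ) (hD : 0 < D)
    (hτ : τ ∈ Set.Icc 0 D) (s : ℕ → ℝ)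
    (hs0 : s 0 = 0) (hmono : ∀ k, k ≤ r → s k ≤ s (k + 1)) (hsend : s (r + 1) = D - τ)
    (A : ℕ → (EuclideanSpace ℝ (Fin q) →L[ℝ] EuclideanSpace ℝ (Fin q)))
    (Bv : ℕ → EuclideanSpace ℝ (Fin q))
    (K : EuclideanSpace ℝ (Fin q) →L[ℝ] ℝ)
    (Abar : EuclideanSpace ℝ (Fin q) →L[ℝ] EuclideanSpace ℝ (Fin q))
    (Bbar : EuclideanSpace ℝ (Fin q))
    (Kbar : EuclideanSpace ℝ (Fin q) →L[ℝ] ℝ)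
    (hAd : ∀ n, 1 ≤ n → n ≤ r + 1 → ‖A n - Abar‖ ≤ εA)
    (hBd : ∀ n, 1 ≤ n → n ≤ r + 1 → ‖Bv n - Bbar‖ ≤ εB)
    (hKd : ‖K - Kbar‖ ≤ εK)
    (hK : ‖K‖ ≤ MK)
    (hAbar : ‖Abar‖ ≤ MAbar) (hA : ∀ n, 1 ≤ n → n ≤ r + 1 → ‖A n‖ ≤ MAbar)
    (hBbar : ‖Bbar‖ ≤ MBbar) (hB : ∀ n, 1 ≤ n → n ≤ r + 1 → ‖Bv n‖ ≤ MBbar)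
    (U : ℝ → ℝ) (hUint : IntegrableOn U (Set.Icc (t - D) t))
    (Δ₂ : ℝ)
    (hΔ₂ : Δ₂ = ∑ n ∈ Finset.Icc 1 (r + 1),
      (Kbar ((dprod (fun j => NormedSpace.exp ((s (j + 1) - s j) • Abar)) n r)
          (∫ θ in (t + τ - D + s (n - 1))..(t + τ - D + s n),
            (NormedSpace.exp ((t + τ - D + s n - θ) • Abar)) (U θ • Bbar))) -
        K ((dprod (fun j => NormedSpace.exp ((s (j + 1) - s j) • A (j + 1))) n r)
          (∫ θ in (t + τ - D + s (n - 1))..(t + τ - D + s n),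
            (NormedSpace.exp ((t + τ - D + s n - θ) • A n)) (U θ • Bv n))))) :
    |Δ₂| ≤
      Real.exp ((MAbar + εA) * (D - τ)) *
          ((εB + 2 * εA * (D - τ) * MBbar) * MK + MBbar * εK) *
        ∫ θ in (t + τ - D)..t, |U θ| := by
  
  obtain ⟨hτ0, hτD⟩ := hτ
  have hDτ : (0:ℝ) ≤ D - τ := by linarith
  have hεA : 0 ≤ εA := (norm_nonneg _).trans (hAd 1 le_rfl (by omega))
  have hεB : 0 ≤ εB := (norm_nonneg _).trans (hBd 1 le_rfl (by omega))
  have hεK : 0 ≤ εK := (norm_nonneg _).trans hKd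
  have hMK : 0 ≤ MK := (norm_nonneg _).trans hK
  have hMA : 0 ≤ MAbar := (norm_nonneg _).trans hAbar
  have hMB : 0 ≤ MBbar := (norm_nonneg _).trans hBbar
  -- monotonicity facts for s
  have hsm : ∀ l, l ≤ r + 1 → ∀ k, k ≤ l → s k ≤ s l := by
    intro l
    induction l with
    | zero =>
      intro _ k hk
      have : k = 0 := Nat.le_zero.mp hk
      rw [this]
    | succ m ih =>
      intro hm k hk
      rcases Nat.eq_or_lt_of_le hk with he | hlt
      · rw [he]
      · exact (ih (by omega) k (by omega)).trans (hmono m (by omega))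
  have hs_nonneg : ∀ k, k ≤ r + 1 → 0 ≤ s k := by
    intro k hk
    have := hsm k hk 0 (Nat.zero_le _)
    rwa [hs0] at this
  have hs_le : ∀ k, k ≤ r + 1 → s k ≤ D - τ := by
    intro k hk
    have := hsm (r + 1) le_rfl k hk
    rwa [hsend] at this
  -- integrability of U on subintervals
  have hUseg : ∀ p w : ℕ, p ≤ w → w ≤ r + 1 →
      IntervalIntegrable U MeasureTheory.volume (t + τ - D + s p) (t + τ - D + s w) := by
    intro p w hpw hw
    have hab : t + τ - D + s p ≤ t + τ - D + s w := by
      have := hsm w hw p hpw; linarith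
    rw [intervalIntegrable_iff_integrableOn_Icc_of_le hab]
    refine hUint.mono_set (Set.Icc_subset_Icc ?_ ?_)
    · have := hs_nonneg p (by omega); linarith
    · have := hs_le w hw; linarith
  have habsseg : ∀ p w : ℕ, p ≤ w → w ≤ r + 1 →
      IntervalIntegrable (fun θ => |U θ|) MeasureTheory.volume
        (t + τ - D + s p) (t + τ - D + s w) := fun p w h1 h2 => (hUseg p w h1 h2).abs
  set Cco : ℝ := (εB + 2 * εA * (D - τ) * MBbar) * MK + MBbar * εK with hCco
  have hCco0 : 0 ≤ Cco := by
    have h2 : 0 ≤ 2 * εA * (D - τ) * MBbar :=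
      mul_nonneg (mul_nonneg (mul_nonneg (by norm_num) hεA) hDτ) hMB
    have : 0 ≤ εB + 2 * εA * (D - τ) * MBbar := by linarith
    have := mul_nonneg this hMK
    have := mul_nonneg hMB hεK
    linarith
  set Cfull : ℝ := Real.exp ((MAbar + εA) * (D - τ)) * Cco with hCfull
  -- the per-term bound
  have main : ∀ n, 1 ≤ n → n ≤ r + 1 →
      |Kbar ((dprod (fun j => NormedSpace.exp ((s (j + 1) - s j) • Abar)) n r)
          (∫ θ in (t + τ - D + s (n - 1))..(t + τ - D + s n),
            (NormedSpace.exp ((t + τ - D + s n - θ) • Abar)) (U θ • Bbar))) -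
        K ((dprod (fun j => NormedSpace.exp ((s (j + 1) - s j) • A (j + 1))) n r)
          (∫ θ in (t + τ - D + s (n - 1))..(t + τ - D + s n),
            (NormedSpace.exp ((t + τ - D + s n - θ) • A n)) (U θ • Bv n)))|
      ≤ Cfull * ∫ θ in (t + τ - D + s (n - 1))..(t + τ - D + s n), |U θ| := by
    intro n hn1 hn2
    set a : ℝ := t + τ - D + s (n - 1) with ha
    set b : ℝ := t + τ - D + s n with hb
    have hsn1 : s (n - 1) ≤ s n := hsm n hn2 (n - 1) (by omega)
    have hab : a ≤ b := by simp only [ha, hb]; linarith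
    have hsn1_nonneg : 0 ≤ s (n - 1) := hs_nonneg (n - 1) (by omega)
    have hsn_le : s n ≤ D - τ := hs_le n hn2
    have hban : b - a = s n - s (n - 1) := by simp only [ha, hb]; ring
    have hbaD : b - a ≤ D - τ := by rw [hban]; linarith
    have hU' : IntervalIntegrable U MeasureTheory.volume a b := hUseg (n - 1) n (by omega) hn2
    have habs : IntervalIntegrable (fun θ => |U θ|) MeasureTheory.volume a b := hU'.abs
    have hUn : IntegrableOn U (Set.Icc a b) :=
      (intervalIntegrable_iff_integrableOn_Icc_of_le hab).mp hU'
    set I : ℝ := ∫ θ in a..b, |U θ| with hI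
    have hI0 : 0 ≤ I :=
      intervalIntegral.integral_nonneg hab (fun u _ => abs_nonneg _)
    -- products
    set Pbar := dprod (fun j => NormedSpace.exp ((s (j + 1) - s j) • Abar)) n r with hPbardef
    set P := dprod (fun j => NormedSpace.exp ((s (j + 1) - s j) • A (j + 1))) n r with hPdef
    set B1 : ℝ := Real.exp (MAbar * (s (r + 1) - s n)) with hB1
    set B2 : ℝ := Real.exp (MAbar * (s n - s (n - 1))) with hB2
    have hPbar : ‖Pbar‖ ≤ B1 :=
      dprod_exp_norm_le s MAbar hMA (fun _ => Abar) n r hn2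
        (fun i _ _ => hAbar) (fun i _ hi2 => hmono i hi2)
    have hP : ‖P‖ ≤ B1 :=
      dprod_exp_norm_le s MAbar hMA (fun j => A (j + 1)) n r hn2
        (fun i _ hi2 => hA (i + 1) (by omega) (by omega)) (fun i _ hi2 => hmono i hi2)
    have hPd : ‖Pbar - P‖ ≤ (εA * (D - τ)) * B1 := by
      refine (dprod_exp_sub_le s MAbar εA hMA Abar (fun j => A (j + 1)) n r hn2 hAbar
        (fun i _ hi2 => hA (i + 1) (by omega) (by omega))
        (fun i _ hi2 => by rw [norm_sub_rev]; exact hAd (i + 1) (by omega) (by omega))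
        hεA (fun i _ hi2 => hmono i hi2)).trans ?_
      have hs1 : s (r + 1) - s n ≤ D - τ := by
        have := hs_nonneg n hn2
        rw [hsend]; linarith
      have hs1' : 0 ≤ s (r + 1) - s n := sub_nonneg.mpr (hsm (r + 1) le_rfl n hn2)
      have : εA * (s (r + 1) - s n) ≤ εA * (D - τ) := mul_le_mul_of_nonneg_left hs1 hεA
      exact mul_le_mul_of_nonneg_right this (Real.exp_nonneg _)
    -- integrals
    set Ibar : EuclideanSpace ℝ (Fin q) :=
      ∫ θ in a..b, (NormedSpace.exp ((b - θ) • Abar)) (U θ • Bbar) with hIbardef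
    set In : EuclideanSpace ℝ (Fin q) :=
      ∫ θ in a..b, (NormedSpace.exp ((b - θ) • A n)) (U θ • Bv n) with hIndef
    -- integrability of integrands
    have hcont : ∀ T : EuclideanSpace ℝ (Fin q) →L[ℝ] EuclideanSpace ℝ (Fin q),
        ∀ v : EuclideanSpace ℝ (Fin q),
        Continuous fun θ : ℝ => (NormedSpace.exp ((b - θ) • T)) v := by
      intro T v
      have h1 : Continuous fun θ : ℝ => (b - θ) • T :=
        (continuous_const.sub continuous_id).smul continuous_const
      exact ((continuous_iff_continuousAt.2 fun x => (NormedSpace.exp_analytic (𝕂 := ℝ) x).continuousAt).comp h1).clm_apply continuous_const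
    have hintg : ∀ T : EuclideanSpace ℝ (Fin q) →L[ℝ] EuclideanSpace ℝ (Fin q),
        ∀ v : EuclideanSpace ℝ (Fin q),
        IntervalIntegrable (fun θ => (NormedSpace.exp ((b - θ) • T)) (U θ • v))
          MeasureTheory.volume a b := by
      intro T v
      rw [intervalIntegrable_iff_integrableOn_Icc_of_le hab]
      have h2 := hUn.smul_continuousOn (hcont T v).continuousOn isCompact_Icc
      refine h2.congr_fun (fun θ _ => ?_) measurableSet_Icc
      exact ((NormedSpace.exp ((b - θ) • T)).map_smul (U θ) v).symm
    -- norm bound on Ibar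
    have hIbar : ‖Ibar‖ ≤ (B2 * MBbar) * I := by
      have hae : ∀ᵐ θ ∂(MeasureTheory.volume.restrict (Set.uIoc a b)),
          ‖(NormedSpace.exp ((b - θ) • Abar)) (U θ • Bbar)‖ ≤ (B2 * MBbar) * |U θ| := by
        refine (MeasureTheory.ae_restrict_mem measurableSet_uIoc).mono ?_
        intro θ hθ
        rw [Set.uIoc_of_le hab] at hθ
        have hh0 : 0 ≤ b - θ := by linarith [hθ.2]
        have hhba : b - θ ≤ b - a := by linarith [hθ.1]
        have h1 : ‖(NormedSpace.exp ((b - θ) • Abar)) (U θ • Bbar)‖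
            ≤ ‖NormedSpace.exp ((b - θ) • Abar)‖ * ‖U θ • Bbar‖ :=
          ContinuousLinearMap.le_opNorm _ _
        have h2 : ‖NormedSpace.exp ((b - θ) • Abar)‖ ≤ Real.exp (MAbar * (b - θ)) :=
          exp_smul_norm_le hAbar hh0
        have h3 : Real.exp (MAbar * (b - θ)) ≤ B2 := by
          rw [hB2, ← hban]
          exact Real.exp_le_exp.mpr (mul_le_mul_of_nonneg_left hhba hMA)
        have h4 : ‖U θ • Bbar‖ ≤ |U θ| * MBbar := by
          refine (norm_smul_le _ _).trans ?_
          rw [Real.norm_eq_abs]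
          exact mul_le_mul_of_nonneg_left hBbar (abs_nonneg _)
        calc ‖(NormedSpace.exp ((b - θ) • Abar)) (U θ • Bbar)‖
            ≤ ‖NormedSpace.exp ((b - θ) • Abar)‖ * ‖U θ • Bbar‖ := h1
          _ ≤ B2 * (|U θ| * MBbar) := by
              refine mul_le_mul (h2.trans h3) h4 (norm_nonneg _)
                ((Real.exp_nonneg _).trans h3)
          _ = (B2 * MBbar) * |U θ| := by ring
      have := intervalIntegral.norm_integral_le_of_norm_le hab
        (by rw [Set.uIoc_of_le hab] at hae; exact (ae_restrict_iff' measurableSet_Ioc).1 hae) (habs.const_mul _)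
      rw [intervalIntegral.integral_const_mul] at this
      exact this
    -- norm bound on Ibar - In
    have hIdiff : ‖Ibar - In‖ ≤ (B2 * (εB + εA * (D - τ) * MBbar)) * I := by
      rw [hIbardef, hIndef, ← intervalIntegral.integral_sub (hintg Abar Bbar) (hintg (A n) (Bv n))]
      have hae : ∀ᵐ θ ∂(MeasureTheory.volume.restrict (Set.uIoc a b)),
          ‖(NormedSpace.exp ((b - θ) • Abar)) (U θ • Bbar)
            - (NormedSpace.exp ((b - θ) • A n)) (U θ • Bv n)‖
          ≤ (B2 * (εB + εA * (D - τ) * MBbar)) * |U θ| := by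
        refine (MeasureTheory.ae_restrict_mem measurableSet_uIoc).mono ?_
        intro θ hθ
        rw [Set.uIoc_of_le hab] at hθ
        have hh0 : 0 ≤ b - θ := by linarith [hθ.2]
        have hhba : b - θ ≤ b - a := by linarith [hθ.1]
        have hhD : b - θ ≤ D - τ := le_trans hhba hbaD
        set h := b - θ with hhdef
        have key : (NormedSpace.exp (h • Abar)) (U θ • Bbar)
            - (NormedSpace.exp (h • A n)) (U θ • Bv n)
            = U θ • ((NormedSpace.exp (h • Abar) - NormedSpace.exp (h • A n)) Bbar
              + (NormedSpace.exp (h • A n)) (Bbar - Bv n)) := by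
          simp only [ContinuousLinearMap.sub_apply, map_sub, ContinuousLinearMap.map_smul, smul_sub, smul_add]
          abel
        rw [key]
        have hd1 : ‖(NormedSpace.exp (h • Abar) - NormedSpace.exp (h • A n)) Bbar‖
            ≤ ((εA * h) * Real.exp (MAbar * h)) * MBbar := by
          refine (ContinuousLinearMap.le_opNorm _ _).trans ?_
          refine mul_le_mul (exp_smul_sub_le hAbar (hA n hn1 hn2)
            (by rw [norm_sub_rev]; exact hAd n hn1 hn2) hh0) hBbar (norm_nonneg _) ?_
          positivity
        have hd2 : ‖(NormedSpace.exp (h • A n)) (Bbar - Bv n)‖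
            ≤ Real.exp (MAbar * h) * εB := by
          refine (ContinuousLinearMap.le_opNorm _ _).trans ?_
          refine mul_le_mul (exp_smul_norm_le (hA n hn1 hn2) hh0) ?_ (norm_nonneg _)
            (Real.exp_nonneg _)
          rw [norm_sub_rev]; exact hBd n hn1 hn2
        have hexp : Real.exp (MAbar * h) ≤ B2 := by
          rw [hB2, ← hban]
          exact Real.exp_le_exp.mpr (mul_le_mul_of_nonneg_left hhba hMA)
        have hvec : ‖(NormedSpace.exp (h • Abar) - NormedSpace.exp (h • A n)) Bbar
            + (NormedSpace.exp (h • A n)) (Bbar - Bv n)‖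
            ≤ B2 * (εB + εA * (D - τ) * MBbar) := by
          refine (norm_add_le _ _).trans ?_
          have hE0 : 0 ≤ Real.exp (MAbar * h) := Real.exp_nonneg _
          have hB20 : 0 ≤ B2 := Real.exp_nonneg _
          have hhe : h * Real.exp (MAbar * h) ≤ (D - τ) * B2 :=
            mul_le_mul hhD hexp hE0 hDτ
          nlinarith [mul_nonneg hεA (mul_nonneg hh0 hE0), mul_nonneg hεB hB20,
            mul_nonneg (mul_nonneg hεA hMB) (sub_nonneg.mpr hhe),
            mul_nonneg hεB (sub_nonneg.mpr hexp)]
        calc ‖U θ • ((NormedSpace.exp (h • Abar) - NormedSpace.exp (h • A n)) Bbar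
              + (NormedSpace.exp (h • A n)) (Bbar - Bv n))‖
            ≤ ‖U θ‖ * ‖(NormedSpace.exp (h • Abar) - NormedSpace.exp (h • A n)) Bbar
              + (NormedSpace.exp (h • A n)) (Bbar - Bv n)‖ := norm_smul_le _ _
          _ ≤ |U θ| * (B2 * (εB + εA * (D - τ) * MBbar)) := by
              rw [Real.norm_eq_abs]
              exact mul_le_mul_of_nonneg_left hvec (abs_nonneg _)
          _ = (B2 * (εB + εA * (D - τ) * MBbar)) * |U θ| := by ring
      have hcoef0 : 0 ≤ B2 * (εB + εA * (D - τ) * MBbar) := by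
        have : 0 ≤ εA * (D - τ) * MBbar := mul_nonneg (mul_nonneg hεA hDτ) hMB
        have : 0 ≤ εB + εA * (D - τ) * MBbar := by linarith
        exact mul_nonneg (Real.exp_nonneg _) this
      have := intervalIntegral.norm_integral_le_of_norm_le hab
        (by rw [Set.uIoc_of_le hab] at hae; exact (ae_restrict_iff' measurableSet_Ioc).1 hae) (habs.const_mul _)
      rw [intervalIntegral.integral_const_mul] at this
      exact this
    -- splitting
    have hsplit : Kbar (Pbar Ibar) - K (P In)
        = (Kbar - K) (Pbar Ibar) + (K ((Pbar - P) Ibar) + K (P (Ibar - In))) := by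
      simp only [ContinuousLinearMap.sub_apply, map_sub]
      ring
    rw [hsplit]
    have hB10 : 0 ≤ B1 := Real.exp_nonneg _
    have hB20 : 0 ≤ B2 := Real.exp_nonneg _
    have t1 : |(Kbar - K) (Pbar Ibar)| ≤ εK * (B1 * ((B2 * MBbar) * I)) := by
      rw [← Real.norm_eq_abs]
      refine (ContinuousLinearMap.le_opNorm _ _).trans ?_
      have hKd' : ‖Kbar - K‖ ≤ εK := by rw [norm_sub_rev]; exact hKd
      refine mul_le_mul hKd' ?_ (norm_nonneg _) hεK
      refine (ContinuousLinearMap.le_opNorm _ _).trans ?_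
      exact mul_le_mul hPbar hIbar (norm_nonneg _) hB10
    have t2 : |K ((Pbar - P) Ibar)| ≤ MK * (((εA * (D - τ)) * B1) * ((B2 * MBbar) * I)) := by
      rw [← Real.norm_eq_abs]
      refine (ContinuousLinearMap.le_opNorm _ _).trans ?_
      refine mul_le_mul hK ?_ (norm_nonneg _) hMK
      refine (ContinuousLinearMap.le_opNorm _ _).trans ?_
      refine mul_le_mul hPd hIbar (norm_nonneg _) ?_
      exact mul_nonneg (mul_nonneg hεA hDτ) hB10
    have t3 : |K (P (Ibar - In))| ≤ MK * (B1 * ((B2 * (εB + εA * (D - τ) * MBbar)) * I)) := by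
      rw [← Real.norm_eq_abs]
      refine (ContinuousLinearMap.le_opNorm _ _).trans ?_
      refine mul_le_mul hK ?_ (norm_nonneg _) hMK
      refine (ContinuousLinearMap.le_opNorm _ _).trans ?_
      exact mul_le_mul hP hIdiff (norm_nonneg _) hB10
    have habs3 : |(Kbar - K) (Pbar Ibar) + (K ((Pbar - P) Ibar) + K (P (Ibar - In)))|
        ≤ |(Kbar - K) (Pbar Ibar)| + (|K ((Pbar - P) Ibar)| + |K (P (Ibar - In))|) :=
      (abs_add_le _ _).trans (by gcongr; exact abs_add_le _ _)
    have hsum : εK * (B1 * ((B2 * MBbar) * I))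
        + (MK * (((εA * (D - τ)) * B1) * ((B2 * MBbar) * I))
          + MK * (B1 * ((B2 * (εB + εA * (D - τ) * MBbar)) * I)))
        = Cco * ((B1 * B2) * I) := by
      rw [hCco]; ring
    have hB12 : B1 * B2 ≤ Real.exp ((MAbar + εA) * (D - τ)) := by
      rw [hB1, hB2, ← Real.exp_add]
      refine Real.exp_le_exp.mpr ?_
      have h1 : MAbar * (s (r + 1) - s n) + MAbar * (s n - s (n - 1))
          = MAbar * (s (r + 1) - s (n - 1)) := by ring
      rw [h1]
      have h2 : s (r + 1) - s (n - 1) ≤ D - τ := by rw [hsend]; linarith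
      have h3 : MAbar * (s (r + 1) - s (n - 1)) ≤ MAbar * (D - τ) :=
        mul_le_mul_of_nonneg_left h2 hMA
      nlinarith [mul_nonneg hεA hDτ]
    calc |(Kbar - K) (Pbar Ibar) + (K ((Pbar - P) Ibar) + K (P (Ibar - In)))|
        ≤ |(Kbar - K) (Pbar Ibar)| + (|K ((Pbar - P) Ibar)| + |K (P (Ibar - In))|) := habs3
      _ ≤ εK * (B1 * ((B2 * MBbar) * I))
          + (MK * (((εA * (D - τ)) * B1) * ((B2 * MBbar) * I))
            + MK * (B1 * ((B2 * (εB + εA * (D - τ) * MBbar)) * I))) := by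
          exact add_le_add t1 (add_le_add t2 t3)
      _ = Cco * ((B1 * B2) * I) := hsum
      _ ≤ Cco * (Real.exp ((MAbar + εA) * (D - τ)) * I) := by
          refine mul_le_mul_of_nonneg_left ?_ hCco0
          exact mul_le_mul_of_nonneg_right hB12 hI0
      _ = Cfull * I := by rw [hCfull]; ring
  -- assemble the sum
  rw [hΔ₂]
  have step1 := Finset.abs_sum_le_sum_abs
    (fun n => Kbar ((dprod (fun j => NormedSpace.exp ((s (j + 1) - s j) • Abar)) n r)
          (∫ θ in (t + τ - D + s (n - 1))..(t + τ - D + s n),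
            (NormedSpace.exp ((t + τ - D + s n - θ) • Abar)) (U θ • Bbar))) -
        K ((dprod (fun j => NormedSpace.exp ((s (j + 1) - s j) • A (j + 1))) n r)
          (∫ θ in (t + τ - D + s (n - 1))..(t + τ - D + s n),
            (NormedSpace.exp ((t + τ - D + s n - θ) • A n)) (U θ • Bv n))))
    (Finset.Icc 1 (r + 1))
  have step2 : ∑ n ∈ Finset.Icc 1 (r + 1),
      |Kbar ((dprod (fun j => NormedSpace.exp ((s (j + 1) - s j) • Abar)) n r)
          (∫ θ in (t + τ - D + s (n - 1))..(t + τ - D + s n),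
            (NormedSpace.exp ((t + τ - D + s n - θ) • Abar)) (U θ • Bbar))) -
        K ((dprod (fun j => NormedSpace.exp ((s (j + 1) - s j) • A (j + 1))) n r)
          (∫ θ in (t + τ - D + s (n - 1))..(t + τ - D + s n),
            (NormedSpace.exp ((t + τ - D + s n - θ) • A n)) (U θ • Bv n)))|
      ≤ ∑ n ∈ Finset.Icc 1 (r + 1),
          Cfull * ∫ θ in (t + τ - D + s (n - 1))..(t + τ - D + s n), |U θ| := by
    refine Finset.sum_le_sum fun n hn => ?_
    rw [Finset.mem_Icc] at hn
    exact main n hn.1 hn.2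
  have step3 : ∑ n ∈ Finset.Icc 1 (r + 1),
      Cfull * ∫ θ in (t + τ - D + s (n - 1))..(t + τ - D + s n), |U θ|
      = Cfull * ∫ θ in (t + τ - D)..t, |U θ| := by
    rw [← Finset.mul_sum]
    congr 1
    have hreindex : ∑ n ∈ Finset.Icc 1 (r + 1),
        ∫ θ in (t + τ - D + s (n - 1))..(t + τ - D + s n), |U θ|
        = ∑ k ∈ Finset.range (r + 1),
          ∫ θ in (t + τ - D + s k)..(t + τ - D + s (k + 1)), |U θ| := by
      rw [← Finset.Ico_add_one_right_eq_Icc, Finset.sum_Ico_eq_sum_range]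
      refine Finset.sum_congr (by norm_num) fun i _ => ?_
      have h1 : 1 + i - 1 = i := by omega
      have h2 : 1 + i = i + 1 := by omega
      rw [h1, h2]
    rw [hreindex]
    have hadj := intervalIntegral.sum_integral_adjacent_intervals
      (a := fun k => t + τ - D + s k) (f := fun θ => |U θ|)
      (μ := MeasureTheory.volume) (n := r + 1)
      (fun k hk => habsseg k (k + 1) (by omega) (by omega))
    have e1 : t + τ - D + s 0 = t + τ - D := by rw [hs0]; ring
    have e2 : t + τ - D + s (r + 1) = t := by rw [hsend]; ring
    rw [hadj]
    simp only [e1, e2]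
  calc |∑ n ∈ Finset.Icc 1 (r + 1), _| ≤ _ := step1
    _ ≤ _ := step2
    _ = Cfull * ∫ θ in (t + τ - D)..t, |U θ| := step3
    _ = Real.exp ((MAbar + εA) * (D - τ)) *
          ((εB + 2 * εA * (D - τ) * MBbar) * MK + MBbar * εK) *
        ∫ θ in (t + τ - D)..t, |U θ| := by rw [hCfull, hCco]
end

section
/- (Lyapunov functional derivative bound along a target subsystem.) Let A be a q×q real matrix, B ∈ ℝ^q, K ∈ ℝ^{1×q}, and let S, Q be symmetric positive definite q×q real matrices with (A + B K)ᵀ S + S (A + B K) = −Q. Let D > 0 and set b = 2 ‖S B‖² / λ_min(Q). Let W : ℝ → ℝ be continuous, and let X be differentiable at every point of an open interval I with X′(t) = (A + B K) X(t) + W(t−D) B. Define V(t) = X(t)ᵀ S X(t) + b ∫_{t−D}^{t} e^{θ + D − t} W(θ)² dθ. Then V is differentiable on I and, for all t ∈ I, V′(t) ≤ −(1/2) λ_min(Q) |X(t)|² + b e^{D} W(t)² − b ∫_{t−D}^{t} e^{θ + D − t} W(θ)² dθ. -/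
open MeasureTheory RealInnerProductSpace

/-- **Lyapunov functional derivative bound along a target subsystem.**
Let `A` be a `q × q` real matrix, `B ∈ ℝ^q`, `K ∈ ℝ^{1×q}`, and let `S, Q` be symmetric
positive definite with `(A + BK)ᵀ S + S (A + BK) = −Q`.  Let `D > 0`,
`b = 2‖S B‖²/λ_min(Q)`, `W` continuous, and let `X` solve
`X′ = (A + BK) X + W(·−D) B` on an open interval `I = (c, d)`.  Then
`V(t) = X(t)ᵀ S X(t) + b ∫_{t−D}^{t} e^{θ+D−t} W(θ)² dθ` is differentiable on `I` with
`V′(t) ≤ −(1/2) λ_min(Q) |X(t)|² + b e^D W(t)² − b ∫_{t−D}^{t} e^{θ+D−t} W(θ)² dθ`.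
(The minimal eigenvalue `λ_min(Q)` is characterized variationally by `hqmin`, `hqmin'`.) -/
theorem stmt11 (q : ℕ) (D : ℝ) (hD : 0 < D)
    (A S Q : EuclideanSpace ℝ (Fin q) →L[ℝ] EuclideanSpace ℝ (Fin q))
    (B : EuclideanSpace ℝ (Fin q)) (K : EuclideanSpace ℝ (Fin q) →L[ℝ] ℝ)
    (hSsym : IsSelfAdjoint S) (hQsym : IsSelfAdjoint Q)
    (hSpos : ∀ x, x ≠ 0 → 0 < ⟪S x, x⟫)
    (qmin : ℝ) (hqpos : 0 < qmin)
    (hqmin : ∀ x, qmin * ‖x‖ ^ 2 ≤ ⟪Q x, x⟫)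
    (hqmin' : ∃ x, ‖x‖ = 1 ∧ ⟪Q x, x⟫ = qmin)
    (hlyap : ContinuousLinearMap.adjoint (A + K.smulRight B) ∘L S +
        S ∘L (A + K.smulRight B) = -Q)
    (b : ℝ) (hb : b = 2 * ‖S B‖ ^ 2 / qmin)
    (W : ℝ → ℝ) (hW : Continuous W)
    (c d : ℝ) (X : ℝ → EuclideanSpace ℝ (Fin q))
    (hX : ∀ u ∈ Set.Ioo c d,
      HasDerivAt X ((A + K.smulRight B) (X u) + W (u - D) • B) u)
    (V : ℝ → ℝ)
    (hV : ∀ u, V u = ⟪X u, S (X u)⟫ +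
      b * ∫ θ in (u - D)..u, Real.exp (θ + D - u) * W θ ^ 2) :
    ∀ u ∈ Set.Ioo c d, ∃ v', HasDerivAt V v' u ∧
      v' ≤ -(1 / 2) * qmin * ‖X u‖ ^ 2 + b * Real.exp D * W u ^ 2 -
        b * ∫ θ in (u - D)..u, Real.exp (θ + D - u) * W θ ^ 2 := by
  intro u hu
  set M := A + K.smulRight B with hM
  set f : ℝ → ℝ := fun θ => Real.exp θ * W θ ^ 2 with hf
  have hfc : Continuous f := Real.continuous_exp.mul (hW.pow 2)
  set g : ℝ → ℝ := fun t => ∫ θ in (0:ℝ)..t, f θ with hg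
  have hgd : ∀ t : ℝ, HasDerivAt g (f t) t := fun t =>
    intervalIntegral.integral_hasDerivAt_right (hfc.intervalIntegrable _ _)
      (hfc.stronglyMeasurableAtFilter _ _) hfc.continuousAt
  have hIeq : ∀ t : ℝ, (∫ θ in (t - D)..t, Real.exp (θ + D - t) * W θ ^ 2)
      = Real.exp (D - t) * (g t - g (t - D)) := by
    intro t
    have h1 : ∀ θ : ℝ, Real.exp (θ + D - t) * W θ ^ 2 = Real.exp (D - t) * f θ := by
      intro θ
      rw [hf, show θ + D - t = (D - t) + θ by ring, Real.exp_add, mul_assoc]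
    simp_rw [h1]
    rw [intervalIntegral.integral_const_mul]
    congr 1
    rw [hg]
    exact (intervalIntegral.integral_interval_sub_left (hfc.intervalIntegrable _ _)
      (hfc.intervalIntegrable _ _)).symm
  have hVeq : V = fun t => ⟪X t, S (X t)⟫ + b * (Real.exp (D - t) * (g t - g (t - D))) := by
    funext t
    rw [hV t, hIeq t]
  -- derivative of the quadratic part
  have hX' := hX u hu
  have hSX : HasDerivAt (fun t => S (X t)) (S (M (X u) + W (u - D) • B)) u :=
    S.hasFDerivAt.comp_hasDerivAt u hX'
  have h1 : HasDerivAt (fun t => ⟪X t, S (X t)⟫)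
      (⟪X u, S (M (X u) + W (u - D) • B)⟫ + ⟪M (X u) + W (u - D) • B, S (X u)⟫) u :=
    hX'.inner ℝ hSX
  -- derivative of the integral part
  have h2 : HasDerivAt (fun t : ℝ => Real.exp (D - t)) (Real.exp (D - u) * (-1)) u :=
    (Real.hasDerivAt_exp (D - u)).comp u (((hasDerivAt_id u).const_sub D).congr_deriv (by ring))
  have h4 : HasDerivAt (fun t : ℝ => g (t - D)) (f (u - D) * 1) u :=
    by have := (hgd (u - D)).comp u ((hasDerivAt_id' u).sub_const D); exact this
  have hInt : HasDerivAt (fun t : ℝ => Real.exp (D - t) * (g t - g (t - D)))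
      (Real.exp (D - u) * (-1) * (g u - g (u - D))
        + Real.exp (D - u) * (f u - f (u - D) * 1)) u :=
    h2.mul ((hgd u).sub h4)
  have hVd : HasDerivAt V
      ((⟪X u, S (M (X u) + W (u - D) • B)⟫ + ⟪M (X u) + W (u - D) • B, S (X u)⟫)
        + b * (Real.exp (D - u) * (-1) * (g u - g (u - D))
          + Real.exp (D - u) * (f u - f (u - D) * 1))) u := by
    rw [hVeq]
    exact h1.add (hInt.const_mul b)
  refine ⟨_, hVd, ?_⟩
  -- now the estimate
  set x := X u with hx
  set w := W (u - D) with hw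
  have hSadj : ∀ y z : EuclideanSpace ℝ (Fin q), ⟪S y, z⟫ = ⟪y, S z⟫ := by
    intro y z
    conv_lhs => rw [← ContinuousLinearMap.isSelfAdjoint_iff'.mp hSsym]
    exact ContinuousLinearMap.adjoint_inner_left S z y
  -- quadratic term via the Lyapunov equation
  have hkey : ⟪x, S (M x)⟫ + ⟪M x, S x⟫ = -⟪Q x, x⟫ := by
    have h := congrArg (fun T : EuclideanSpace ℝ (Fin q) →L[ℝ] EuclideanSpace ℝ (Fin q) =>
      ⟪T x, x⟫) hlyap
    simp only [ContinuousLinearMap.add_apply, ContinuousLinearMap.comp_apply,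
      ContinuousLinearMap.neg_apply, inner_add_left, inner_neg_left,
      ContinuousLinearMap.adjoint_inner_left] at h
    have h' : ⟪M x, S x⟫ = ⟪S x, M x⟫ := real_inner_comm _ _
    have h'' : ⟪S (M x), x⟫ = ⟪x, S (M x)⟫ := real_inner_comm _ _
    linarith [h, h', h'']
  -- expand the inner products
  have hexp1 : ⟪x, S (M x + w • B)⟫ = ⟪x, S (M x)⟫ + w * ⟪S B, x⟫ := by
    rw [map_add, S.map_smul, inner_add_right, real_inner_smul_right, real_inner_comm x (S B)]
  have hexp2 : ⟪M x + w • B, S x⟫ = ⟪M x, S x⟫ + w * ⟪S B, x⟫ := by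
    rw [inner_add_left, real_inner_smul_left, hSadj B x]
  -- cross term estimate
  have hcross : 2 * w * ⟪S B, x⟫ ≤ qmin / 2 * ‖x‖ ^ 2 + b * w ^ 2 := by
    have habs : ⟪S B, x⟫ ≤ ‖S B‖ * ‖x‖ := real_inner_le_norm _ _
    have habs' : -(‖S B‖ * ‖x‖) ≤ ⟪S B, x⟫ := by
      have := real_inner_le_norm (S B) (-x)
      simp only [inner_neg_right, norm_neg] at this
      linarith
    rw [hb]
    have hr : |⟪S B, x⟫| ≤ ‖S B‖ * ‖x‖ := abs_le.mpr ⟨habs', habs⟩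
    have hwr : w * ⟪S B, x⟫ ≤ |w| * (‖S B‖ * ‖x‖) :=
      calc w * ⟪S B, x⟫ ≤ |w * ⟪S B, x⟫| := le_abs_self _
        _ = |w| * |⟪S B, x⟫| := abs_mul _ _
        _ ≤ |w| * (‖S B‖ * ‖x‖) := mul_le_mul_of_nonneg_left hr (abs_nonneg w)
    have hsqabs : |w| ^ 2 = w ^ 2 := sq_abs w
    have h0 : 0 ≤ (qmin * ‖x‖ - 2 * ‖S B‖ * |w|) ^ 2 / (2 * qmin) :=
      div_nonneg (sq_nonneg _) (by linarith)
    have heq : (qmin * ‖x‖ - 2 * ‖S B‖ * |w|) ^ 2 / (2 * qmin)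
        = qmin / 2 * ‖x‖ ^ 2 - 2 * (|w| * (‖S B‖ * ‖x‖)) + 2 * ‖S B‖ ^ 2 / qmin * w ^ 2 := by
      rw [← hsqabs]
      field_simp
      ring
    rw [heq] at h0
    linarith
  have hQx : -⟪Q x, x⟫ ≤ -(qmin * ‖x‖ ^ 2) := neg_le_neg (hqmin x)
  -- simplify the exponential products
  have he1 : Real.exp (D - u) * f u = Real.exp D * W u ^ 2 := by
    rw [hf, ← mul_assoc, ← Real.exp_add, sub_add_cancel]
  have he2 : Real.exp (D - u) * f (u - D) = w ^ 2 := by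
    rw [hf, hw, ← mul_assoc, ← Real.exp_add, show D - u + (u - D) = 0 by ring, Real.exp_zero,
      one_mul]
  rw [hexp1, hexp2, hIeq u]
  have e1 : b * (Real.exp (D - u) * f u) = b * (Real.exp D * W u ^ 2) := by rw [he1]
  have e2 : b * (Real.exp (D - u) * f (u - D)) = b * w ^ 2 := by rw [he2]
  have hid : b * (Real.exp (D - u) * -1 * (g u - g (u - D))
        + Real.exp (D - u) * (f u - f (u - D) * 1))
      = b * (Real.exp (D - u) * f u) - b * (Real.exp (D - u) * f (u - D))
        - b * (Real.exp (D - u) * (g u - g (u - D))) := by ring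
  linarith [hkey, hcross, hQx, e1, e2, hid]
end
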